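/- arXiv:1710.06592 — 2 statements merged into one kernel-verified Lean document; each statement's English description precedes it below -/
import Mathlib

section
/- For each k ∈ ℕ and each γ > 0 there exists a constant c_{k,γ} < ∞ such that for all ε ∈ (0,1) and all potentials ξ satisfying the truncation bound max_{x∈D_ε}|ξ(x)| ≤ ε^{−κ}, one has the deterministic inclusion E_{k,ε,γ} ⊆ {ξ : Λ_k^ε(ξ) ≤ c_{k,γ}}. -/
open MeasureTheory ProbabilityTheory Filter Set
attribute [local instance] Classical.propDecidable
open scoped NNReal ENNReal Topology

noncomputable section

/-- A lattice site in `ℤ^d`. -/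
abbrev Site (d : ℕ) := Fin d → ℤ

namespace AndersonCLT

variable (d : ℕ)

/-- The embedding `x ↦ εx` of the lattice into `ℝ^d` (with its sup metric). -/
def emb (ε : ℝ) (x : Site d) : Fin d → ℝ := fun i => ε * (x i : ℝ)

/-- The discretized domain `D_ε = {x ∈ ℤ^d : dist_∞(εx, D^c) > ε}`. -/
def Deps (D : Set (Fin d → ℝ)) (ε : ℝ) : Set (Site d) :=
  {x | ε < Metric.infDist (emb d ε x) Dᶜ}

/-- The lattice Laplacian `(Δ^d f)(x) = Σ_{|y-x|=1} (f y - f x)`. -/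
def dLap (f : Site d → ℝ) (x : Site d) : ℝ :=
  ∑ i : Fin d, ((f (x + Pi.single i 1) - f x) + (f (x - Pi.single i 1) - f x))

/-- The Anderson Hamiltonian `H_{D_ε,ξ} f = -ε⁻² Δ^d f + ξ f`. -/
def Hop (ε : ℝ) (ξ : Site d → ℝ) (f : Site d → ℝ) (x : Site d) : ℝ :=
  -(ε ^ 2)⁻¹ * dLap d f x + ξ x * f x

/-- The discrete gradient `∇^d f(x) ∈ ℝ^d`. -/
def dGrad (f : Site d → ℝ) (x : Site d) : Fin d → ℝ := fun i => f (x + Pi.single i 1) - f x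

/-- The unscaled `ℓ^p`-norm of a function on the lattice. -/
def lpNorm (p : ℝ) (f : Site d → ℝ) : ℝ := (∑' x : Site d, |f x| ^ p) ^ (1 / p)

/-- The sup norm of a function on the lattice. -/
def supNorm (f : Site d → ℝ) : ℝ := ⨆ x : Site d, |f x|

/-- The scaled norm `‖f‖_{ε,p} = (ε^d Σ_x |f x|^p)^{1/p}`. -/
def eNorm (ε p : ℝ) (f : Site d → ℝ) : ℝ := (ε ^ d * ∑' x : Site d, |f x| ^ p) ^ (1 / p)

/-- The unscaled squared `ℓ²`-norm of the discrete gradient, `Σ_x |∇^d f(x)|²`. -/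
def dGradSq (f : Site d → ℝ) : ℝ :=
  ∑' x : Site d, ∑ i : Fin d, (f (x + Pi.single i 1) - f x) ^ 2

/-- The Rayleigh quotient of `H_{D_ε,ξ}`. -/
def dRayleigh (ε : ℝ) (ξ : Site d → ℝ) (f : Site d → ℝ) : ℝ :=
  (∑' x : Site d, f x * Hop d ε ξ f x) / (∑' x : Site d, (f x) ^ 2)

/-- The `k`-th smallest eigenvalue (k = 1, 2, …) of `H_{D_ε,ξ}`, via the Courant–Fischer
min-max principle over `k`-dimensional subspaces of functions vanishing outside `D_ε`. -/
def evalk (D : Set (Fin d → ℝ)) (ε : ℝ) (ξ : Site d → ℝ) (k : ℕ) : ℝ :=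
  sInf { t | ∃ V : Submodule ℝ (Site d → ℝ), Module.finrank ℝ V = k ∧
      (∀ f ∈ V, ∀ x, x ∉ Deps d D ε → f x = 0) ∧
      t = sSup (dRayleigh d ε ξ '' {f | f ∈ V ∧ f ≠ 0}) }

/-- `g` is an `ℓ²(ℤ^d)`-normalized eigenfunction of `H_{D_ε,ξ}` with eigenvalue `lam`. -/
structure IsDiscEigenfun (D : Set (Fin d → ℝ)) (ε : ℝ) (ξ : Site d → ℝ)
    (lam : ℝ) (g : Site d → ℝ) : Prop where
  normalized : ∑' x : Site d, (g x) ^ 2 = 1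
  vanish : ∀ x, x ∉ Deps d D ε → g x = 0
  eigen : ∀ x ∈ Deps d D ε, Hop d ε ξ g x = lam * g x

/-- The eigenvalue `λ^{(k)}_{D_ε,ξ}` is simple (the normalized eigenfunction is
unique up to sign). -/
def DiscSimple (D : Set (Fin d → ℝ)) (ε : ℝ) (ξ : Site d → ℝ) (k : ℕ) : Prop :=
  (∃ g, IsDiscEigenfun d D ε ξ (evalk d D ε ξ k) g) ∧
  ∀ g g', IsDiscEigenfun d D ε ξ (evalk d D ε ξ k) g →
    IsDiscEigenfun d D ε ξ (evalk d D ε ξ k) g' → g' = g ∨ g' = -g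

/-- The continuum Rayleigh quotient of `H_{D,U} = -Δ + U`. -/
def cRayleigh (U : (Fin d → ℝ) → ℝ) (f : (Fin d → ℝ) → ℝ) : ℝ :=
  (∫ x : Fin d → ℝ, ((∑ i : Fin d, (fderiv ℝ f x (Pi.single i 1)) ^ 2) + U x * (f x) ^ 2)) /
    (∫ x : Fin d → ℝ, (f x) ^ 2)

/-- The `k`-th smallest Dirichlet eigenvalue (k = 1, 2, …, with multiplicity) of
`H_{D,U} = -Δ + U` on `D`, via the Courant–Fischer min-max principle over
`k`-dimensional spaces of smooth test functions compactly supported in `D`. -/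
def cEvalk (D : Set (Fin d → ℝ)) (U : (Fin d → ℝ) → ℝ) (k : ℕ) : ℝ :=
  sInf { t | ∃ V : Submodule ℝ ((Fin d → ℝ) → ℝ), Module.finrank ℝ V = k ∧
      (∀ f ∈ V, ContDiff ℝ (⊤ : ℕ∞) f ∧ tsupport f ⊆ D) ∧
      t = sSup (cRayleigh d U '' {f | f ∈ V ∧ f ≠ 0}) }

/-- `φ` is an `L²`-normalized (weak) eigenfunction of `H_{D,U}` with Dirichlet boundary
conditions, with eigenvalue `lam`; it is `C¹` inside `D`. -/
structure IsCtsEigenfun (D : Set (Fin d → ℝ)) (U : (Fin d → ℝ) → ℝ)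
    (lam : ℝ) (φ : (Fin d → ℝ) → ℝ) : Prop where
  normalized : ∫ x in D, (φ x) ^ 2 = 1
  zero_outside : ∀ x, x ∉ closure D → φ x = 0
  contOn : ContinuousOn φ (closure D)
  regular : ContDiffOn ℝ 1 φ D
  weak_eigen : ∀ ψ : (Fin d → ℝ) → ℝ, ContDiff ℝ (⊤ : ℕ∞) ψ → tsupport ψ ⊆ D →
    ∫ x in D, ((∑ i : Fin d, fderiv ℝ φ x (Pi.single i 1) * fderiv ℝ ψ x (Pi.single i 1))
        + U x * φ x * ψ x)
      = lam * ∫ x in D, φ x * ψ x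

/-- The continuum eigenvalue `lam` is simple: a normalized eigenfunction exists and is
unique up to an overall sign. -/
def CtsSimple (D : Set (Fin d → ℝ)) (U : (Fin d → ℝ) → ℝ) (lam : ℝ) : Prop :=
  (∃ φ, IsCtsEigenfun d D U lam φ) ∧
  ∀ φ ψ, IsCtsEigenfun d D U lam φ → IsCtsEigenfun d D U lam ψ → ψ = φ ∨ ψ = -φ

/-- `D` has a `C^{1,α}` boundary: near every boundary point, `D` is the subgraph, in some
coordinate direction, of a `C¹` function whose gradient is `α`-Hölder continuous. -/
def C1AlphaBoundary (D : Set (Fin d → ℝ)) (α : ℝ≥0) : Prop :=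
  ∀ z ∈ frontier D, ∃ (i : Fin d) (σ r : ℝ) (g : (Fin d → ℝ) → ℝ) (C : ℝ≥0),
    0 < r ∧ (σ = 1 ∨ σ = -1) ∧ ContDiff ℝ 1 g ∧
    (∀ x y : Fin d → ℝ, (∀ j, j ≠ i → x j = y j) → g x = g y) ∧
    HolderWith C α (fderiv ℝ g) ∧
    ∀ x ∈ Metric.ball z r, (x ∈ D ↔ σ * x i < g x)

/-- `D ⊂ ℝ^d` is a bounded open domain with `C^{1,α}` boundary for some `α > 0`. -/
structure NiceDomain (D : Set (Fin d → ℝ)) : Prop where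
  bounded : Bornology.IsBounded D
  isOpen : IsOpen D
  nonempty : D.Nonempty
  c1alpha : ∃ α : ℝ≥0, 0 < α ∧ C1AlphaBoundary d D α

/-- Assumption 1: independence of the field, uniformly bounded `K`-th moments for some
`K > max(1, d/2)`, and mean profile `𝔼 ξ^{(ε)}(x) = U(εx)` with `U` bounded continuous. -/
structure Assumption1 {Ω : Type*} [MeasurableSpace Ω] (P : Measure Ω)
    (D : Set (Fin d → ℝ)) (ξ : ℝ → Ω → Site d → ℝ) (K : ℝ) (U : (Fin d → ℝ) → ℝ) : Prop where
  hK : max 1 ((d : ℝ) / 2) < K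
  meas : ∀ ε ∈ Ioo (0:ℝ) 1, ∀ x : Site d, Measurable fun ω => ξ ε ω x
  indep : ∀ ε ∈ Ioo (0:ℝ) 1,
    iIndepFun
      (fun (x : Deps d D ε) ω => ξ ε ω (x : Site d)) P
  moment : ∃ C : ℝ, ∀ ε ∈ Ioo (0:ℝ) 1, ∀ x ∈ Deps d D ε,
    ∫⁻ ω, ENNReal.ofReal (|ξ ε ω x| ^ K) ∂P ≤ ENNReal.ofReal C
  mean : ∀ ε ∈ Ioo (0:ℝ) 1, ∀ x ∈ Deps d D ε, ∫ ω, ξ ε ω x ∂P = U (emb d ε x)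
  intg : ∀ ε ∈ Ioo (0:ℝ) 1, ∀ x ∈ Deps d D ε, Integrable (fun ω => ξ ε ω x) P
  Ucont : ContinuousOn U D
  Ubdd : ∃ M : ℝ, ∀ x ∈ D, |U x| ≤ M

/-- Assumption 2: moments of order `K > max(2, d/2)` and variance profile
`Var(ξ^{(ε)}(x)) = V(εx)` with `V` bounded continuous and nonnegative. -/
structure Assumption2 {Ω : Type*} [MeasurableSpace Ω] (P : Measure Ω)
    (D : Set (Fin d → ℝ)) (ξ : ℝ → Ω → Site d → ℝ) (K : ℝ) (V : (Fin d → ℝ) → ℝ) : Prop where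
  hK : max 2 ((d : ℝ) / 2) < K
  var : ∀ ε ∈ Ioo (0:ℝ) 1, ∀ x ∈ Deps d D ε,
    variance (fun ω => ξ ε ω x) P = V (emb d ε x)
  Vcont : ContinuousOn V D
  Vnonneg : ∀ x ∈ D, 0 ≤ V x
  Vbdd : ∃ M : ℝ, ∀ x ∈ D, V x ≤ M

/-- The truncation bound: `max_{x ∈ D_ε} |ξ^{(ε)}(x)| ≤ ε^{-κ}` (surely). -/
def TruncBound {Ω : Type*} (D : Set (Fin d → ℝ)) (ξ : ℝ → Ω → Site d → ℝ) (κ : ℝ) : Prop :=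
  ∀ ε ∈ Ioo (0:ℝ) 1, ∀ ω, ∀ x ∈ Deps d D ε, |ξ ε ω x| ≤ ε ^ (-κ)

/-- `sup_{x ∈ D_ε} 𝔼 |ξ^{(ε)}(x)|^r`. -/
def momentSup {Ω : Type*} [MeasurableSpace Ω] (P : Measure Ω) (D : Set (Fin d → ℝ))
    (ξ : ℝ → Ω → Site d → ℝ) (ε r : ℝ) : ℝ :=
  ⨆ x : Deps d D ε, ∫ ω, |ξ ε ω (x : Site d)| ^ r ∂P

/-- The event `E_{k,ε,γ}` (for a given choice `φ` of continuum eigenfunctions and bound `M`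
for `max_{x∈D_ε} 𝔼|ξ(x)|^r`): the potential, extended by zero outside `D_ε`, pairs closely
with the first `k` squared eigenfunctions and has a controlled scaled `ℓ^r`-norm. -/
def Eevent (D : Set (Fin d → ℝ)) (U : (Fin d → ℝ) → ℝ) (φ : ℕ → (Fin d → ℝ) → ℝ)
    (ε γ r M : ℝ) (k : ℕ) : Set (Site d → ℝ) :=
  {ξ | (∀ j ∈ Finset.Icc 1 k,
        |∑' x : Deps d D ε,
            ε ^ d * ((ξ (x : Site d) - U (emb d ε (x : Site d)))
              * (φ j (emb d ε (x : Site d))) ^ 2)| < γ) ∧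
      eNorm d ε r (fun x => if x ∈ Deps d D ε then ξ x else 0)
        < 4 * (volume D).toReal * M }

/-- The block `B_L(y)` of side `L` containing the site `x`. -/
def blockOf (L : ℕ) (x : Site d) : Finset (Site d) :=
  Fintype.piFinset fun i =>
    Finset.Ico ((L : ℤ) * ((x i).fdiv (L : ℤ))) ((L : ℤ) * ((x i).fdiv (L : ℤ)) + (L : ℤ))

/-- The block average `f_L` of `f` over the partition into boxes of side `L`. -/
def blockAvg (L : ℕ) (f : Site d → ℝ) (x : Site d) : ℝ :=
  ((L : ℝ) ^ d)⁻¹ * ∑ z ∈ blockOf d L x, f z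

/-- The block size `L = ε^{-ρ}` (as a natural number). -/
def Lof (ε ρ : ℝ) : ℕ := ⌈ε ^ (-ρ)⌉₊

/-- The event `F_{ε,γ} = {ξ : ‖(U(ε·) - ξ)_L‖_{ε,r} < γ}` with `L = ε^{-ρ}`. -/
def Fevent (D : Set (Fin d → ℝ)) (U : (Fin d → ℝ) → ℝ) (ε γ r ρ : ℝ) :
    Set (Site d → ℝ) :=
  {ξ | eNorm d ε r (blockAvg d (Lof ε ρ)
        (fun x => if x ∈ Deps d D ε then U (emb d ε x) - ξ x else 0)) < γ}

/-- `Λ_k^ε(ξ) = Σ_{i=1}^k λ^{(i)}_{D_ε,ξ}`. -/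
def LambdaEps (D : Set (Fin d → ℝ)) (ε : ℝ) (ξ : Site d → ℝ) (k : ℕ) : ℝ :=
  ∑ i ∈ Finset.Icc 1 k, evalk d D ε ξ i

/-- `Λ_k = Σ_{i=1}^k λ_D^{(i)}`. -/
def LambdaCont (D : Set (Fin d → ℝ)) (U : (Fin d → ℝ) → ℝ) (k : ℕ) : ℝ :=
  ∑ i ∈ Finset.Icc 1 k, cEvalk d D U i


/-- The defining property of `w = (H_{D_ε,ξ} - λ^{(k)})^{-1}(1 - P̂_k)δ_y` when `λ^{(k)}` is a
simple eigenvalue: `w` is supported in `D_ε`, orthogonal to the eigenspace, and solves the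
resolvent equation with right-hand side `(1 - P̂_k)δ_y`. -/
def GreenPred (D : Set (Fin d → ℝ)) (ε : ℝ) (ξ : Site d → ℝ) (k : ℕ) (y : Site d)
    (w : Site d → ℝ) : Prop :=
  (∀ z, z ∉ Deps d D ε → w z = 0) ∧
  (∀ g, IsDiscEigenfun d D ε ξ (evalk d D ε ξ k) g → ∑' z : Site d, w z * g z = 0) ∧
  (∀ g, IsDiscEigenfun d D ε ξ (evalk d D ε ξ k) g → ∀ z ∈ Deps d D ε,
    Hop d ε ξ w z - evalk d D ε ξ k * w z = (if z = y then 1 else 0) - g y * g z)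

/-- The Green-type kernel `G_{D_ε}^{(k)}(x, y; ξ) = ⟨δ_x, (H_{D_ε,ξ} - λ^{(k)})^{-1}(1-P̂_k)δ_y⟩`. -/
def Gfun (D : Set (Fin d → ℝ)) (ε : ℝ) (ξ : Site d → ℝ) (k : ℕ) (x y : Site d) : ℝ :=
  if h : ∃ w, GreenPred d D ε ξ k y w then h.choose x else 0

/-- `G(ε) = c_G ε` in `d = 1`, `c_G ε² log(1/ε)` in `d = 2`, `c_G ε²` in `d ≥ 3`. -/
def Gbnd (cG ε : ℝ) : ℝ :=
  if d = 1 then cG * ε else if d = 2 then cG * ε ^ 2 * Real.log (1 / ε) else cG * ε ^ 2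

/-- `δ_k = (1/3) min{λ_D^{(k)} - λ_D^{(k-1)}, λ_D^{(k+1)} - λ_D^{(k)}}`. -/
def deltaGap (D : Set (Fin d → ℝ)) (U : (Fin d → ℝ) → ℝ) (k : ℕ) : ℝ :=
  min (cEvalk d D U k - cEvalk d D U (k - 1)) (cEvalk d D U (k + 1) - cEvalk d D U k) / 3

/-- The event `A¹_{k,ε}`: the first `k+1` discrete eigenvalues stay `δ_k`-close to the
continuum ones under arbitrary admissible changes of the potential at a single site. -/
def A1event (D : Set (Fin d → ℝ)) (U : (Fin d → ℝ) → ℝ) (ε κ : ℝ) (k : ℕ) :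
    Set (Site d → ℝ) :=
  {ξ | ∀ x ∈ Deps d D ε, ∀ ξ' : Site d → ℝ, (∀ z, z ≠ x → ξ' z = ξ z) → |ξ' x| ≤ ε ^ (-κ) →
      ∀ i ∈ Finset.Icc 1 (k + 1), |evalk d D ε ξ' i - cEvalk d D U i| < deltaGap d D U k}

/-- The event `A²_{k,ε}`: the diagonal Green kernel stays bounded by `G(ε)` under arbitrary
admissible changes of the potential at a single site. -/
def A2event (D : Set (Fin d → ℝ)) (ε κ cG : ℝ) (k : ℕ) : Set (Site d → ℝ) :=
  {ξ | ∀ x ∈ Deps d D ε, ∀ ξ' : Site d → ℝ, (∀ z, z ≠ x → ξ' z = ξ z) → |ξ' x| ≤ ε ^ (-κ) →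
      |Gfun d D ε ξ' k x x| ≤ Gbnd d cG ε}

/-- The event `A_{k,ε,γ} = A¹_{k,ε} ∩ A²_{k,ε} ∩ E_{k,ε,γ} ∩ F_{ε,γ}`. -/
def Aevent (D : Set (Fin d → ℝ)) (U : (Fin d → ℝ) → ℝ) (φ : ℕ → (Fin d → ℝ) → ℝ)
    (ε γ r ρ κ cG M : ℝ) (k : ℕ) : Set (Site d → ℝ) :=
  A1event d D U ε κ k ∩ A2event d D ε κ cG k ∩ Eevent d D U φ ε γ r M k ∩ Fevent d D U ε γ r ρ

/-- The filtration `𝓕_m = σ(ξ(x_1), …, ξ(x_m))`. -/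
def filtr {Ω : Type*} [MeasurableSpace Ω] (ξconf : Ω → Site d → ℝ) (xs : ℕ → Site d)
    (m : ℕ) : MeasurableSpace Ω :=
  ⨆ i ∈ Finset.Icc 1 m, MeasurableSpace.comap (fun ω => ξconf ω (xs i)) inferInstance

/-- The martingale increment `Z_m^{(k)} = 𝔼(λ^{(k)}_{D_ε,ξ}|𝓕_m) - 𝔼(λ^{(k)}_{D_ε,ξ}|𝓕_{m-1})`. -/
def Zinc {Ω : Type*} [MeasurableSpace Ω] (P : Measure Ω) (D : Set (Fin d → ℝ)) (ε : ℝ)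
    (ξconf : Ω → Site d → ℝ) (xs : ℕ → Site d) (k m : ℕ) : Ω → ℝ :=
  P[(fun ω => evalk d D ε (ξconf ω) k) | filtr d ξconf xs m]
    - P[(fun ω => evalk d D ε (ξconf ω) k) | filtr d ξconf xs (m - 1)]

/-- The box `B_ε(x) = εx + [0,ε)^d`. -/
def Beps (ε : ℝ) (x : Site d) : Set (Fin d → ℝ) :=
  {y | ∀ i, y i ∈ Set.Ico (ε * (x i : ℝ)) (ε * (x i : ℝ) + ε)}

/-- The (choice-independent, on simple eigenvalues) squared `k`-th eigenfunction at `x`. -/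
def eigSq (D : Set (Fin d → ℝ)) (ε : ℝ) (ξ : Site d → ℝ) (k : ℕ) (x : Site d) : ℝ :=
  if h : ∃ g, IsDiscEigenfun d D ε ξ (evalk d D ε ξ k) g then (h.choose x) ^ 2 else 0

end AndersonCLT

end


noncomputable section
namespace AndersonCLT

variable (d : ℕ)

/-- sup norm on sites -/
def nrmN (x : Site d) : ℕ := Finset.univ.sup fun i => (x i).natAbs

lemma nrmN_le_iff {x : Site d} {m : ℕ} : nrmN d x ≤ m ↔ ∀ i, (x i).natAbs ≤ m := by
  simp [nrmN, Finset.sup_le_iff]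

lemma le_nrmN (x : Site d) (i : Fin d) : (x i).natAbs ≤ nrmN d x :=
  Finset.le_sup (f := fun i => (x i).natAbs) (Finset.mem_univ i)

lemma nrmN_zero : nrmN d (0 : Site d) = 0 := by simp [nrmN]

lemma nrmN_add_single_le (x : Site d) (i : Fin d) :
    nrmN d (x + Pi.single i 1) ≤ nrmN d x + 1 := by
  rw [nrmN_le_iff]
  intro j
  have : (x + Pi.single i 1 : Site d) j = x j + (Pi.single i 1 : Site d) j := rfl
  rw [this]
  refine le_trans (Int.natAbs_add_le _ _) ?_
  have h1 : ((Pi.single i 1 : Site d) j).natAbs ≤ 1 := by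
    rcases eq_or_ne j i with h | h <;> simp [Pi.single_apply, h]
  exact add_le_add (le_nrmN d x j) h1

lemma nrmN_le_add_single (x : Site d) (i : Fin d) :
    nrmN d x ≤ nrmN d (x + Pi.single i 1) + 1 := by
  rw [nrmN_le_iff]
  intro j
  have hx : x j = (x + Pi.single i 1 : Site d) j + (- (Pi.single i 1 : Site d) j) := by
    simp
  rw [hx]
  refine le_trans (Int.natAbs_add_le _ _) ?_
  have h1 : ((- (Pi.single i 1 : Site d) j)).natAbs ≤ 1 := by
    rcases eq_or_ne j i with h | h <;> simp [Pi.single_apply, h]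
  exact add_le_add (le_nrmN d _ j) h1

/-- lattice tent function -/
def tent (W : ℕ) (c x : Site d) : ℝ := max ((W : ℝ) - (nrmN d (x - c) : ℝ)) 0

lemma tent_nonneg (W : ℕ) (c x : Site d) : 0 ≤ tent d W c x := le_max_right _ _

lemma tent_le (W : ℕ) (c x : Site d) : tent d W c x ≤ W := by
  apply max_le _ (by positivity)
  have : (0:ℝ) ≤ (nrmN d (x - c) : ℝ) := by positivity
  linarith

lemma tent_self (W : ℕ) (c : Site d) : tent d W c c = W := by
  simp [tent, nrmN_zero]

lemma nrmN_lt_of_tent_ne_zero {W : ℕ} {c x : Site d} (h : tent d W c x ≠ 0) :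
    nrmN d (x - c) < W := by
  by_contra hc
  push_neg at hc
  apply h
  have : (W:ℝ) - (nrmN d (x - c) : ℝ) ≤ 0 := by
    have := Nat.cast_le (α := ℝ).2 hc
    linarith
  simp [tent, max_eq_right this]

lemma tent_ge {W h : ℕ} {c x : Site d} (hx : nrmN d (x - c) ≤ h) :
    (W : ℝ) - h ≤ tent d W c x := by
  refine le_trans ?_ (le_max_left _ _)
  have := Nat.cast_le (α := ℝ).2 hx
  linarith

lemma tent_lip (W : ℕ) (c x : Site d) (i : Fin d) :
    |tent d W c (x + Pi.single i 1) - tent d W c x| ≤ 1 := by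
  have key : |((W : ℝ) - (nrmN d (x + Pi.single i 1 - c) : ℝ)) - ((W:ℝ) - (nrmN d (x - c) : ℝ))| ≤ 1 := by
    have h1 : nrmN d (x + Pi.single i 1 - c) ≤ nrmN d (x - c) + 1 := by
      have : x + Pi.single i 1 - c = (x - c) + Pi.single i 1 := by abel
      rw [this]; exact nrmN_add_single_le d _ i
    have h2 : nrmN d (x - c) ≤ nrmN d (x + Pi.single i 1 - c) + 1 := by
      have : x + Pi.single i 1 - c = (x - c) + Pi.single i 1 := by abel
      rw [this]; exact nrmN_le_add_single d _ i
    rw [abs_le]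
    constructor
    · have := Nat.cast_le (α := ℝ).2 h1; push_cast at this ⊢; linarith
    · have := Nat.cast_le (α := ℝ).2 h2; push_cast at this ⊢; linarith
  calc |tent d W c (x + Pi.single i 1) - tent d W c x|
      ≤ |((W : ℝ) - (nrmN d (x + Pi.single i 1 - c) : ℝ)) - ((W:ℝ) - (nrmN d (x - c) : ℝ))| :=
        abs_max_sub_max_le_abs _ _ _
    _ ≤ 1 := key

/-- box of radius m around c -/
def box (c : Site d) (m : ℕ) : Finset (Site d) :=
  Fintype.piFinset fun i => Finset.Icc (c i - m) (c i + m)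

lemma mem_box {c x : Site d} {m : ℕ} : x ∈ box d c m ↔ nrmN d (x - c) ≤ m := by
  rw [box, Fintype.mem_piFinset, nrmN_le_iff]
  apply forall_congr'
  intro i
  rw [Finset.mem_Icc]
  have : ((x - c) i) = x i - c i := rfl
  rw [this]
  omega

lemma card_box (c : Site d) (m : ℕ) : (box d c m).card = (2 * m + 1) ^ d := by
  rw [box, Fintype.card_piFinset]
  have : ∀ i : Fin d, (Finset.Icc (c i - (m:ℤ)) (c i + m)).card = 2 * m + 1 := by
    intro i
    rw [Int.card_Icc]
    omega
  simp only [this]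
  simp


section Tsum

lemma summable_finsupp {g : Site d → ℝ} {T : Finset (Site d)} (h : ∀ x ∉ T, g x = 0) :
    Summable g := summable_of_ne_finset_zero h

lemma tsum_shift (g : Site d → ℝ) (v : Site d) : ∑' x, g (x + v) = ∑' x, g x :=
  (Equiv.addRight v).tsum_eq g

variable {f : Site d → ℝ} {T : Finset (Site d)}

lemma summable_mul_right (hf : ∀ x ∉ T, f x = 0) (g : Site d → ℝ) :
    Summable fun x => f x * g x :=
  summable_finsupp d (T := T) (fun x hx => by rw [hf x hx, zero_mul])

lemma summable_shift_mul (hf : ∀ x ∉ T, f x = 0) (v : Site d) (g : Site d → ℝ) :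
    Summable fun x => f (x + v) * g x := by
  apply summable_finsupp d (T := T.image (fun z => z - v))
  intro x hx
  have : f (x + v) = 0 := by
    apply hf
    intro hmem
    exact hx (Finset.mem_image.2 ⟨x + v, hmem, by abel⟩)
  rw [this, zero_mul]

lemma tsum_grad_sq (hf : ∀ x ∉ T, f x = 0) (i : Fin d) :
    ∑' x, (f (x + Pi.single i 1) - f x) ^ 2
      = 2 * (∑' x, f x ^ 2) - 2 * ∑' x, f x * f (x + Pi.single i 1) := by
  set e : Site d := Pi.single i 1
  have h1 : Summable fun x => f (x + e) * f (x + e) := summable_shift_mul d hf e _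
  have h2 : Summable fun x => f x * f x := summable_mul_right d hf _
  have h3 : Summable fun x => f x * f (x + e) := summable_mul_right d hf _
  have expand : ∀ x : Site d, (f (x + e) - f x) ^ 2
      = (f (x + e) * f (x + e) + f x * f x) - 2 * (f x * f (x + e)) := by
    intro x; ring
  rw [tsum_congr expand, Summable.tsum_sub (h1.add h2) (h3.mul_left 2), Summable.tsum_add h1 h2,
    tsum_mul_left]
  have hshift : ∑' x, f (x + e) * f (x + e) = ∑' x, f x * f x :=
    tsum_shift d (fun x => f x * f x) e
  have hsq : ∑' x, f x * f x = ∑' x, f x ^ 2 := tsum_congr fun x => (sq (f x)).symm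
  rw [hshift, hsq]; ring

lemma tsum_mul_dLap (hf : ∀ x ∉ T, f x = 0) :
    ∑' x, f x * dLap d f x = - dGradSq d f := by
  have hswap : ∑' x, f x * dLap d f x
      = ∑ i : Fin d, ∑' x, f x * ((f (x + Pi.single i 1) - f x) + (f (x - Pi.single i 1) - f x)) := by
    rw [← Summable.tsum_finsetSum (fun i _ => summable_mul_right d hf _)]
    apply tsum_congr; intro x
    rw [dLap, Finset.mul_sum]
  have hswap2 : dGradSq d f = ∑ i : Fin d, ∑' x, (f (x + Pi.single i 1) - f x) ^ 2 := by
    rw [dGradSq, ← Summable.tsum_finsetSum]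
    intro i _
    apply summable_finsupp d (T := T ∪ T.image (fun z => z - Pi.single i 1))
    intro x hx
    rw [Finset.mem_union, not_or] at hx
    have hx1 : f x = 0 := hf x hx.1
    have hx2 : f (x + Pi.single i 1) = 0 := by
      apply hf; intro hmem
      exact hx.2 (Finset.mem_image.2 ⟨x + Pi.single i 1, hmem, by abel⟩)
    rw [hx1, hx2]; ring
  rw [hswap, hswap2, ← Finset.sum_neg_distrib]
  apply Finset.sum_congr rfl
  intro i _
  set e : Site d := Pi.single i 1
  have h2 : Summable fun x => f x * f x := summable_mul_right d hf _
  have h3 : Summable fun x => f x * f (x + e) := summable_mul_right d hf _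
  have h4 : Summable fun x => f x * f (x - e) := summable_mul_right d hf _
  have expand : ∀ x : Site d, f x * ((f (x + e) - f x) + (f (x - e) - f x))
      = (f x * f (x + e) + f x * f (x - e)) - 2 * (f x * f x) := by
    intro x; ring
  rw [tsum_congr expand, Summable.tsum_sub (h3.add h4) (h2.mul_left 2), Summable.tsum_add h3 h4, tsum_mul_left]
  have hshift : ∑' x, f (x + e) * f x = ∑' x, f x * f (x - e) := by
    have := tsum_shift d (fun x => f x * f (x - e)) e
    simp only [add_sub_cancel_right] at this
    exact this
  have hcomm : ∑' x, f x * f (x + e) = ∑' x, f (x + e) * f x :=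
    tsum_congr fun x => mul_comm _ _
  rw [tsum_grad_sq d hf i]
  have hsq : ∑' x, f x * f x = ∑' x, f x ^ 2 := tsum_congr fun x => (sq (f x)).symm
  rw [← hshift, ← hcomm, hsq]; ring

lemma tsum_mul_Hop (ε : ℝ) (ξ : Site d → ℝ) (hf : ∀ x ∉ T, f x = 0) :
    ∑' x, f x * Hop d ε ξ f x = (ε ^ 2)⁻¹ * dGradSq d f + ∑' x, ξ x * f x ^ 2 := by
  have expand : ∀ x : Site d, f x * Hop d ε ξ f x
      = -(ε ^ 2)⁻¹ * (f x * dLap d f x) + ξ x * f x ^ 2 := by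
    intro x; rw [Hop]; ring
  have h1 : Summable fun x => f x * dLap d f x := summable_mul_right d hf _
  have h2 : Summable fun x => ξ x * f x ^ 2 := by
    apply summable_finsupp d (T := T)
    intro x hx; rw [hf x hx]; ring
  rw [tsum_congr expand, Summable.tsum_add (h1.mul_left _) h2, tsum_mul_left, tsum_mul_dLap d hf]
  ring

lemma tsum_sq_pos (hf : ∀ x ∉ T, f x = 0) (hne : f ≠ 0) : 0 < ∑' x, f x ^ 2 := by
  obtain ⟨x₀, hx₀⟩ := Function.ne_iff.1 hne
  have hsum : Summable fun x => f x ^ 2 := by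
    apply summable_finsupp d (T := T); intro x hx; rw [hf x hx]; ring
  have : f x₀ ^ 2 ≤ ∑' x, f x ^ 2 := Summable.le_tsum hsum x₀ (fun j _ => sq_nonneg _)
  have hne0 : f x₀ ≠ 0 := by simpa using hx₀
  have hpos : 0 < f x₀ ^ 2 := by positivity
  linarith

lemma dGradSq_le (hf : ∀ x ∉ T, f x = 0) :
    dGradSq d f ≤ 4 * d * ∑' x, f x ^ 2 := by
  have hswap2 : dGradSq d f = ∑ i : Fin d, ∑' x, (f (x + Pi.single i 1) - f x) ^ 2 := by
    rw [dGradSq, ← Summable.tsum_finsetSum]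
    intro i _
    apply summable_finsupp d (T := T ∪ T.image (fun z => z - Pi.single i 1))
    intro x hx
    rw [Finset.mem_union, not_or] at hx
    have hx1 : f x = 0 := hf x hx.1
    have hx2 : f (x + Pi.single i 1) = 0 := by
      apply hf; intro hmem
      exact hx.2 (Finset.mem_image.2 ⟨x + Pi.single i 1, hmem, by abel⟩)
    rw [hx1, hx2]; ring
  rw [hswap2]
  have hN : 0 ≤ ∑' x, f x ^ 2 := tsum_nonneg fun x => sq_nonneg _
  have key : ∀ i : Fin d, ∑' x, (f (x + Pi.single i 1) - f x) ^ 2 ≤ 4 * ∑' x, f x ^ 2 := by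
    intro i
    rw [tsum_grad_sq d hf i]
    have hA : - (∑' x, f x ^ 2) ≤ ∑' x, f x * f (x + Pi.single i 1) := by
      set e : Site d := Pi.single i 1
      have hptw : ∀ x : Site d, -(1/2) * (f x ^ 2 + f (x + e) ^ 2) ≤ f x * f (x + e) := by
        intro x; nlinarith [sq_nonneg (f x + f (x + e))]
      have hs1 : Summable fun x => f x ^ 2 := by
        apply summable_finsupp d (T := T); intro x hx; rw [hf x hx]; ring
      have hs2 : Summable fun x => f (x + e) ^ 2 := by
        have := summable_shift_mul d hf e (fun x => f (x + e))
        apply this.congr; intro x; rw [sq]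
      have hs3 : Summable fun x => f x * f (x + e) := summable_mul_right d hf _
      have := Summable.tsum_le_tsum hptw ((hs1.add hs2).mul_left _) hs3
      rw [tsum_mul_left, Summable.tsum_add hs1 hs2] at this
      have hshift : ∑' x, f (x + e) ^ 2 = ∑' x, f x ^ 2 :=
        tsum_shift d (fun x => f x ^ 2) e
      rw [hshift] at this
      linarith
    linarith
  calc ∑ i : Fin d, ∑' x, (f (x + Pi.single i 1) - f x) ^ 2
      ≤ ∑ _i : Fin d, 4 * ∑' x, f x ^ 2 := Finset.sum_le_sum fun i _ => key i
    _ = 4 * d * ∑' x, f x ^ 2 := by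
        rw [Finset.sum_const, Finset.card_univ, Fintype.card_fin, nsmul_eq_mul]; ring

lemma tsum_pot_le (ξ : Site d → ℝ) (hf : ∀ x ∉ T, f x = 0) (t : ℝ)
    (hb : ∀ x, f x ≠ 0 → |ξ x| ≤ t) :
    ∑' x, ξ x * f x ^ 2 ≤ t * ∑' x, f x ^ 2 := by
  have hs1 : Summable fun x => ξ x * f x ^ 2 := by
    apply summable_finsupp d (T := T); intro x hx; rw [hf x hx]; ring
  have hs2 : Summable fun x => t * f x ^ 2 := by
    apply summable_finsupp d (T := T); intro x hx; rw [hf x hx]; ring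
  have := Summable.tsum_le_tsum (f := fun x => ξ x * f x ^ 2) (g := fun x => t * f x ^ 2) ?_ hs1 hs2
  · rw [tsum_mul_left] at this; exact this
  · intro x
    by_cases hx : f x = 0
    · simp [hx]
    · have h1 : ξ x ≤ t := le_trans (le_abs_self _) (hb x hx)
      have h2 : 0 ≤ f x ^ 2 := sq_nonneg _
      exact mul_le_mul_of_nonneg_right h1 h2

lemma dRayleigh_le_of (ε : ℝ) (ξ : Site d → ℝ) (B : ℝ) (hf : ∀ x ∉ T, f x = 0)
    (hne : f ≠ 0)
    (hnum : ∑' x, f x * Hop d ε ξ f x ≤ B * ∑' x, f x ^ 2) :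
    dRayleigh d ε ξ f ≤ B := by
  rw [dRayleigh, div_le_iff₀ (tsum_sq_pos d hf hne)]
  exact hnum

end Tsum

section Evalk

lemma evalk_le_forall {D : Set (Fin d → ℝ)} {ε : ℝ} {ξ : Site d → ℝ} {i : ℕ} {B : ℝ}
    (hB : 0 ≤ B)
    (h : ∀ f : Site d → ℝ, (∀ x, x ∉ Deps d D ε → f x = 0) → f ≠ 0 →
      dRayleigh d ε ξ f ≤ B) :
    evalk d D ε ξ i ≤ B := by
  rw [evalk]
  set S := { t | ∃ V : Submodule ℝ (Site d → ℝ), Module.finrank ℝ V = i ∧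
      (∀ f ∈ V, ∀ x, x ∉ Deps d D ε → f x = 0) ∧
      t = sSup (dRayleigh d ε ξ '' {f | f ∈ V ∧ f ≠ 0}) } with hSdef
  by_cases hS : S.Nonempty
  · by_cases hbd : BddBelow S
    · obtain ⟨t, ht⟩ := hS
      refine le_trans (csInf_le hbd ht) ?_
      obtain ⟨V, hfr, hvan, rfl⟩ := ht
      apply Real.sSup_le _ hB
      rintro _ ⟨g, ⟨hgV, hg0⟩, rfl⟩
      exact h g (hvan g hgV) hg0
    · rw [Real.sInf_of_not_bddBelow hbd]; exact hB
  · rw [Set.not_nonempty_iff_eq_empty] at hS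
    rw [hS, Real.sInf_empty]; exact hB

lemma evalk_le_subspace {D : Set (Fin d → ℝ)} {ε : ℝ} {ξ : Site d → ℝ} {i : ℕ} {B : ℝ}
    (hB : 0 ≤ B) (V : Submodule ℝ (Site d → ℝ))
    (hfr : Module.finrank ℝ V = i)
    (hvan : ∀ f ∈ V, ∀ x, x ∉ Deps d D ε → f x = 0)
    (h : ∀ f ∈ V, f ≠ 0 → dRayleigh d ε ξ f ≤ B) :
    evalk d D ε ξ i ≤ B := by
  rw [evalk]
  set S := { t | ∃ V : Submodule ℝ (Site d → ℝ), Module.finrank ℝ V = i ∧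
      (∀ f ∈ V, ∀ x, x ∉ Deps d D ε → f x = 0) ∧
      t = sSup (dRayleigh d ε ξ '' {f | f ∈ V ∧ f ≠ 0}) } with hSdef
  have hmem : sSup (dRayleigh d ε ξ '' {f | f ∈ V ∧ f ≠ 0}) ∈ S := ⟨V, hfr, hvan, rfl⟩
  have hle : sSup (dRayleigh d ε ξ '' {f | f ∈ V ∧ f ≠ 0}) ≤ B := by
    apply Real.sSup_le _ hB
    rintro _ ⟨g, ⟨hgV, hg0⟩, rfl⟩
    exact h g hgV hg0
  by_cases hbd : BddBelow S
  · exact le_trans (csInf_le hbd hmem) hle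
  · rw [Real.sInf_of_not_bddBelow hbd]; exact hB

lemma Deps_finite {D : Set (Fin d → ℝ)} (hbd : Bornology.IsBounded D) {ε : ℝ}
    (hε : 0 < ε) : (Deps d D ε).Finite := by
  obtain ⟨R, hR⟩ := hbd.subset_closedBall 0
  set N : ℕ := ⌈R / ε⌉₊
  apply Set.Finite.subset
    (Set.finite_coe_iff.mp ?_ : (↑(Fintype.piFinset fun _ : Fin d =>
      Finset.Icc (-(N:ℤ)) (N:ℤ)) : Set (Site d)).Finite)
  · intro x hx
    have hxD : emb d ε x ∈ D := by
      by_contra hc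
      have h0 : Metric.infDist (emb d ε x) Dᶜ = 0 :=
        Metric.infDist_zero_of_mem hc
      have := hx
      rw [Deps, Set.mem_setOf_eq, h0] at this
      linarith
    have hdist : dist (emb d ε x) 0 ≤ R := by
      have := hR hxD
      rwa [Metric.mem_closedBall] at this
    simp only [Finset.coe_sort_coe, Fintype.mem_piFinset, Finset.mem_coe]
    intro i
    have hcomp : dist (emb d ε x i) ((0 : Fin d → ℝ) i) ≤ R :=
      le_trans (dist_le_pi_dist _ _ i) hdist
    have : |ε * (x i : ℝ)| ≤ R := by
      rw [abs_mul]
      simpa [emb, Real.dist_eq, abs_mul] using hcomp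
    have hxi : |(x i : ℝ)| ≤ R / ε := by
      rw [abs_mul, abs_of_pos hε] at this
      rw [le_div_iff₀ hε]; linarith
    have hN : |(x i : ℝ)| ≤ (N : ℝ) := le_trans hxi (Nat.le_ceil _)
    rw [Finset.mem_Icc]
    have := abs_le.1 hN
    constructor
    · exact_mod_cast this.1
    · exact_mod_cast this.2
  · exact Set.finite_coe_iff.mpr (Finset.finite_toSet _)

/-- crude Rayleigh bound for any f supported in Deps -/
lemma dRayleigh_le_crude {D : Set (Fin d → ℝ)} {ε : ℝ} (hε : 0 < ε)
    (hbd : Bornology.IsBounded D) {ξ : Site d → ℝ} {t : ℝ}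
    (hξ : ∀ x ∈ Deps d D ε, |ξ x| ≤ t)
    (f : Site d → ℝ) (hvan : ∀ x, x ∉ Deps d D ε → f x = 0) (hne : f ≠ 0) :
    dRayleigh d ε ξ f ≤ 4 * d * (ε ^ 2)⁻¹ + t := by
  set T : Finset (Site d) := (Deps_finite d hbd hε).toFinset
  have hf : ∀ x ∉ T, f x = 0 := by
    intro x hx
    apply hvan
    intro hmem
    exact hx ((Deps_finite d hbd hε).mem_toFinset.2 hmem)
  apply dRayleigh_le_of d ε ξ _ hf hne
  rw [tsum_mul_Hop d ε ξ hf]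
  have h1 : (ε ^ 2)⁻¹ * dGradSq d f ≤ (ε ^ 2)⁻¹ * (4 * d * ∑' x, f x ^ 2) := by
    apply mul_le_mul_of_nonneg_left (dGradSq_le d hf) (by positivity)
  have h2 : ∑' x, ξ x * f x ^ 2 ≤ t * ∑' x, f x ^ 2 := by
    apply tsum_pot_le d ξ hf t
    intro x hx
    apply hξ
    by_contra hc
    exact hx (hvan x hc)
  have hN : 0 ≤ ∑' x, f x ^ 2 := tsum_nonneg fun x => sq_nonneg _
  nlinarith [h1, h2]

lemma sq_sum_of_disjoint {m : ℕ} (v : Fin m → ℝ)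
    (h : ∀ j j', v j ≠ 0 → v j' ≠ 0 → j = j') :
    (∑ j, v j) ^ 2 = ∑ j, v j ^ 2 := by
  by_cases hex : ∃ j, v j ≠ 0
  · obtain ⟨j₀, hj₀⟩ := hex
    have hz : ∀ b ∈ Finset.univ, b ≠ j₀ → v b = 0 := by
      intro b _ hb
      by_contra hc
      exact hb (h b j₀ hc hj₀)
    rw [Finset.sum_eq_single_of_mem j₀ (Finset.mem_univ _) hz,
      Finset.sum_eq_single_of_mem j₀ (Finset.mem_univ _) (fun b hb hbne => by
        rw [hz b hb hbne]; ring)]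
  · push_neg at hex
    have h0 : ∀ j ∈ Finset.univ, v j = 0 := fun j _ => hex j
    rw [Finset.sum_eq_zero h0, Finset.sum_eq_zero (fun j hj => by rw [hex j]; ring)]
    ring

end Evalk

section TentBounds

variable {D : Set (Fin d → ℝ)} {ε : ℝ} {W : ℕ} {c : Site d}

lemma tent_support (hx : (x : Site d) ∉ box d c W) : tent d W c x = 0 := by
  by_contra hc
  exact hx (mem_box d |>.2 (le_of_lt (nrmN_lt_of_tent_ne_zero d hc)))

lemma tent_diff_support {x : Site d} {κ : Fin d}
    (h : tent d W c (x + Pi.single κ 1) - tent d W c x ≠ 0) : x ∈ box d c W := by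
  by_cases h1 : tent d W c x ≠ 0
  · exact mem_box d |>.2 (le_of_lt (nrmN_lt_of_tent_ne_zero d h1))
  · push_neg at h1
    have h2 : tent d W c (x + Pi.single κ 1) ≠ 0 := by
      intro hc; apply h; rw [hc, h1]; ring
    have h3 := nrmN_lt_of_tent_ne_zero d h2
    have h4 : nrmN d (x - c) ≤ nrmN d ((x - c) + Pi.single κ 1) + 1 :=
      nrmN_le_add_single d _ κ
    have h5 : (x - c) + Pi.single κ 1 = x + Pi.single κ 1 - c := by abel
    rw [h5] at h4
    rw [mem_box]
    omega

lemma dGradSq_tent_le :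
    dGradSq d (tent d W c) ≤ (d : ℝ) * (2 * W + 1) ^ d := by
  rw [dGradSq]
  have hsupp : ∀ x ∉ box d c W,
      (∑ κ : Fin d, (tent d W c (x + Pi.single κ 1) - tent d W c x) ^ 2) = 0 := by
    intro x hx
    apply Finset.sum_eq_zero
    intro κ _
    rcases eq_or_ne (tent d W c (x + Pi.single κ 1) - tent d W c x) 0 with h | h
    · rw [h]; ring
    · exact absurd (tent_diff_support d h) hx
  rw [tsum_eq_sum hsupp]
  calc ∑ x ∈ box d c W, ∑ κ : Fin d, (tent d W c (x + Pi.single κ 1) - tent d W c x) ^ 2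
      ≤ ∑ _x ∈ box d c W, (d : ℝ) := by
        apply Finset.sum_le_sum
        intro x _
        calc ∑ κ : Fin d, (tent d W c (x + Pi.single κ 1) - tent d W c x) ^ 2
            ≤ ∑ _κ : Fin d, (1:ℝ) := by
              apply Finset.sum_le_sum
              intro κ _
              have := tent_lip d W c x κ
              nlinarith [abs_nonneg (tent d W c (x + Pi.single κ 1) - tent d W c x),
                sq_abs (tent d W c (x + Pi.single κ 1) - tent d W c x)]
          _ = (d : ℝ) := by simp
    _ = (box d c W).card * (d:ℝ) := by rw [Finset.sum_const, nsmul_eq_mul]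
    _ ≤ (d : ℝ) * (2 * W + 1) ^ d := by
        rw [card_box]
        push_cast
        rw [mul_comm]

lemma tent_l2_ge (hW : 1 ≤ W) :
    (W : ℝ) ^ d * ((W : ℝ) / 2) ^ 2 ≤ ∑' x, tent d W c x ^ 2 := by
  set h : ℕ := W / 2
  have hsum : Summable fun x => tent d W c x ^ 2 := by
    apply summable_finsupp d (T := box d c W)
    intro x hx; rw [tent_support d hx]; ring
  have step1 : ∑ x ∈ box d c h, tent d W c x ^ 2 ≤ ∑' x, tent d W c x ^ 2 :=
    Summable.sum_le_tsum _ (fun x _ => sq_nonneg _) hsum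
  refine le_trans ?_ step1
  have hterm : ∀ x ∈ box d c h, ((W:ℝ)/2) ^ 2 ≤ tent d W c x ^ 2 := by
    intro x hx
    have h1 : (W:ℝ) - (h:ℕ) ≤ tent d W c x := tent_ge d (mem_box d |>.1 hx)
    have h2 : (h : ℝ) ≤ (W:ℝ)/2 := by
      have : 2 * h ≤ W := by simp only [h]; omega
      have := Nat.cast_le (α := ℝ).2 this
      push_cast at this
      linarith
    have h3 : (W:ℝ)/2 ≤ tent d W c x := by linarith
    have h0 : (0:ℝ) ≤ (W:ℝ)/2 := by positivity
    exact pow_le_pow_left₀ h0 h3 2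
  calc (W:ℝ)^d * ((W:ℝ)/2)^2 ≤ ((box d c h).card : ℝ) * ((W:ℝ)/2)^2 := by
        apply mul_le_mul_of_nonneg_right _ (by positivity)
        rw [card_box]
        have hc1 : (W:ℝ) ≤ (2 * h + 1 : ℕ) := by
          have : W ≤ 2 * h + 1 := by omega
          exact_mod_cast this
        calc (W:ℝ)^d ≤ ((2*h+1 : ℕ):ℝ)^d := pow_le_pow_left₀ (by positivity) hc1 d
          _ = (((2*h+1)^d : ℕ) : ℝ) := by push_cast; ring
    _ ≤ ∑ x ∈ box d c h, tent d W c x ^ 2 := by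
        have h5 := Finset.sum_le_sum hterm
        rwa [Finset.sum_const, nsmul_eq_mul] at h5

lemma abs_le_rpow_add_one {t r : ℝ} (hr : 1 ≤ r) : |t| ≤ |t| ^ r + 1 := by
  rcases le_or_gt (|t|) 1 with h | h
  · have : (0:ℝ) ≤ |t| ^ r := Real.rpow_nonneg (abs_nonneg t) r
    linarith
  · have h2 : |t| ^ (1:ℝ) ≤ |t| ^ r :=
      Real.rpow_le_rpow_of_exponent_le (le_of_lt h) hr
    rw [Real.rpow_one] at h2
    linarith

lemma tent_pot_le {ξ : Site d → ℝ} {r Mr : ℝ} (hr : 1 ≤ r)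
    (hDfin : (Deps d D ε).Finite)
    (hsub : ↑(box d c W) ⊆ Deps d D ε)
    (hmask : ∑' x, |(fun y => if y ∈ Deps d D ε then ξ y else 0) x| ^ r ≤ Mr) :
    |∑' x, ξ x * tent d W c x ^ 2| ≤ (W:ℝ)^2 * (Mr + (2 * W + 1) ^ d) := by
  set m : Site d → ℝ := fun y => if y ∈ Deps d D ε then ξ y else 0 with hm
  have hsupp : ∀ x ∉ box d c W, ξ x * tent d W c x ^ 2 = 0 := by
    intro x hx; rw [tent_support d hx]; ring
  rw [tsum_eq_sum hsupp]
  have hsummask : Summable fun x => |m x| ^ r := by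
    apply summable_finsupp d (T := hDfin.toFinset)
    intro x hx
    have : x ∉ Deps d D ε := fun hc => hx (hDfin.mem_toFinset.2 hc)
    simp only [hm, if_neg this, abs_zero]
    rw [Real.zero_rpow (by linarith : r ≠ 0)]
  have key : ∀ x ∈ box d c W, |ξ x * tent d W c x ^ 2| ≤ (W:ℝ)^2 * (|m x| ^ r + 1) := by
    intro x hx
    have hmem : x ∈ Deps d D ε := hsub hx
    have hmx : m x = ξ x := if_pos hmem
    have h1 : |ξ x * tent d W c x ^ 2| = |ξ x| * tent d W c x ^ 2 := by
      rw [abs_mul, abs_of_nonneg (sq_nonneg (tent d W c x))]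
    rw [h1]
    have h2 : tent d W c x ^ 2 ≤ (W:ℝ)^2 :=
      pow_le_pow_left₀ (tent_nonneg d W c x) (tent_le d W c x) 2
    have h3 : |ξ x| ≤ |m x| ^ r + 1 := by
      rw [hmx]; exact abs_le_rpow_add_one hr
    have h4 : (0:ℝ) ≤ |m x| ^ r + 1 := by positivity
    calc |ξ x| * tent d W c x ^ 2 ≤ (|m x| ^ r + 1) * (W:ℝ)^2 := by
          apply mul_le_mul h3 h2 (sq_nonneg _) h4
      _ = (W:ℝ)^2 * (|m x| ^ r + 1) := by ring
  calc |∑ x ∈ box d c W, ξ x * tent d W c x ^ 2|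
      ≤ ∑ x ∈ box d c W, |ξ x * tent d W c x ^ 2| := Finset.abs_sum_le_sum_abs _ _
    _ ≤ ∑ x ∈ box d c W, (W:ℝ)^2 * (|m x| ^ r + 1) := Finset.sum_le_sum key
    _ = (W:ℝ)^2 * (∑ x ∈ box d c W, |m x| ^ r + (box d c W).card) := by
        rw [← Finset.mul_sum]
        congr 1
        rw [Finset.sum_add_distrib, Finset.sum_const, nsmul_eq_mul, mul_one]
    _ ≤ (W:ℝ)^2 * (Mr + (2 * W + 1) ^ d) := by
        apply mul_le_mul_of_nonneg_left _ (by positivity)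
        have hA : ∑ x ∈ box d c W, |m x| ^ r ≤ Mr :=
          le_trans (Summable.sum_le_tsum _ (fun x _ => Real.rpow_nonneg (abs_nonneg _) r) hsummask) hmask
        have hB : ((box d c W).card : ℝ) = ((2*W+1 : ℕ) : ℝ)^d := by
          rw [card_box]; push_cast; ring
        rw [hB]
        push_cast
        linarith

end TentBounds

section Master

lemma evalk_le_of_tents {D : Set (Fin d → ℝ)} {ε B : ℝ} {ξ : Site d → ℝ} {W k i : ℕ}
    (hW : 1 ≤ W) (hB : 0 ≤ B) (hik : i ≤ k) (c : Fin k → Site d)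
    (hsep : ∀ j j' : Fin k, ∀ x : Site d, x ∈ box d (c j) W → x ∈ box d (c j') W → j = j')
    (hsub : ∀ j : Fin k, ↑(box d (c j) W) ⊆ Deps d D ε)
    (hnum : ∀ j : Fin k,
      (ε ^ 2)⁻¹ * dGradSq d (tent d W (c j)) + ∑' x, ξ x * tent d W (c j) x ^ 2
        ≤ B * ∑' x, tent d W (c j) x ^ 2) :
    evalk d D ε ξ i ≤ B := by
  classical
  set g : Fin k → Site d → ℝ := fun j => tent d W (c j) with hg
  have hsupp : ∀ (j : Fin k) (x : Site d), g j x ≠ 0 → x ∈ box d (c j) W := by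
    intro j x hx
    exact mem_box d |>.2 (le_of_lt (nrmN_lt_of_tent_ne_zero d hx))
  have hdiff : ∀ (j : Fin k) (x : Site d) (κ : Fin d),
      g j (x + Pi.single κ 1) - g j x ≠ 0 → x ∈ box d (c j) W := by
    intro j x κ hx
    exact tent_diff_support d hx
  -- linear independence
  have hli : LinearIndependent ℝ g := by
    rw [Fintype.linearIndependent_iff]
    intro a ha j
    have hev := congrFun ha (c j)
    rw [Finset.sum_apply] at hev
    have hsingle : ∑ i', (a i' • g i') (c j) = a j * (W : ℝ) := by
      rw [Finset.sum_eq_single_of_mem j (Finset.mem_univ _)]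
      · show a j * tent d W (c j) (c j) = a j * (W:ℝ)
        rw [tent_self]
      · intro b _ hb
        rw [Pi.smul_apply, smul_eq_mul]
        rcases eq_or_ne (g b (c j)) 0 with h | h
        · rw [h]; ring
        · exfalso
          apply hb
          apply hsep b j (c j) (hsupp b _ h)
          rw [mem_box, sub_self, nrmN_zero]
          exact Nat.zero_le _
    rw [hsingle] at hev
    have hWne : (W:ℝ) ≠ 0 := by positivity
    have : (0 : (Site d) → ℝ) (c j) = 0 := rfl
    rw [this] at hev
    exact (mul_eq_zero.1 hev).resolve_right hWne
  set gi : Fin i → Site d → ℝ := fun j => g (Fin.castLE hik j) with hgi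
  have hli2 : LinearIndependent ℝ gi := hli.comp _ (Fin.castLE_injective hik)
  set V : Submodule ℝ (Site d → ℝ) := Submodule.span ℝ (Set.range gi) with hV
  have hfr : Module.finrank ℝ V = i := by
    rw [hV, finrank_span_eq_card hli2, Fintype.card_fin]
  have happly : ∀ (a : Fin i → ℝ) (x : Site d),
      (∑ j, a j • gi j) x = ∑ j, a j * gi j x := by
    intro a x
    rw [Finset.sum_apply]
    exact Finset.sum_congr rfl fun j _ => rfl
  have hrepr : ∀ f ∈ V, ∃ a : Fin i → ℝ, ∀ x, f x = ∑ j, a j * gi j x := by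
    intro f hf
    obtain ⟨a, ha⟩ := (Submodule.mem_span_range_iff_exists_fun ℝ).1 hf
    exact ⟨a, fun x => by rw [← ha, happly]⟩
  have hvan : ∀ f ∈ V, ∀ x, x ∉ Deps d D ε → f x = 0 := by
    intro f hf x hx
    obtain ⟨a, ha⟩ := hrepr f hf
    rw [ha]
    apply Finset.sum_eq_zero
    intro j _
    rcases eq_or_ne (gi j x) 0 with h | h
    · rw [h]; ring
    · exact absurd (hsub _ (hsupp _ x h)) hx
  apply evalk_le_subspace d hB V hfr hvan
  intro f hf hne
  obtain ⟨a, ha⟩ := hrepr f hf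
  -- pointwise decoupling
  have hdisj : ∀ (x : Site d) (j j' : Fin i),
      x ∈ box d (c (Fin.castLE hik j)) W → x ∈ box d (c (Fin.castLE hik j')) W → j = j' := by
    intro x j j' h1 h2
    exact Fin.castLE_injective hik (hsep _ _ x h1 h2)
  have hptsq : ∀ x : Site d, f x ^ 2 = ∑ j, a j ^ 2 * gi j x ^ 2 := by
    intro x
    have hd : ∀ j j' : Fin i, a j * gi j x ≠ 0 → a j' * gi j' x ≠ 0 → j = j' := by
      intro j j' hj hj'
      have h1 : gi j x ≠ 0 := fun hc => hj (by rw [hc]; ring)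
      have h2 : gi j' x ≠ 0 := fun hc => hj' (by rw [hc]; ring)
      exact hdisj x j j' (hsupp _ x h1) (hsupp _ x h2)
    calc f x ^ 2 = (∑ j, a j * gi j x) ^ 2 := by rw [ha x]
      _ = ∑ j, (a j * gi j x) ^ 2 := sq_sum_of_disjoint (fun j => a j * gi j x) hd
      _ = ∑ j, a j ^ 2 * gi j x ^ 2 := Finset.sum_congr rfl fun j _ => by ring
  have hptdiff : ∀ (x : Site d) (κ : Fin d),
      (f (x + Pi.single κ 1) - f x) ^ 2
        = ∑ j, a j ^ 2 * (gi j (x + Pi.single κ 1) - gi j x) ^ 2 := by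
    intro x κ
    have hsub' : f (x + Pi.single κ 1) - f x
        = ∑ j, a j * (gi j (x + Pi.single κ 1) - gi j x) := by
      rw [ha x, ha (x + Pi.single κ 1), ← Finset.sum_sub_distrib]
      exact Finset.sum_congr rfl fun j _ => by ring
    have hd : ∀ j j' : Fin i, a j * (gi j (x + Pi.single κ 1) - gi j x) ≠ 0 →
        a j' * (gi j' (x + Pi.single κ 1) - gi j' x) ≠ 0 → j = j' := by
      intro j j' hj hj'
      have h1 : gi j (x + Pi.single κ 1) - gi j x ≠ 0 := fun hc => hj (by rw [hc]; ring)
      have h2 : gi j' (x + Pi.single κ 1) - gi j' x ≠ 0 := fun hc => hj' (by rw [hc]; ring)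
      exact hdisj x j j' (hdiff _ x κ h1) (hdiff _ x κ h2)
    calc (f (x + Pi.single κ 1) - f x) ^ 2
        = (∑ j, a j * (gi j (x + Pi.single κ 1) - gi j x)) ^ 2 := by rw [hsub']
      _ = ∑ j, (a j * (gi j (x + Pi.single κ 1) - gi j x)) ^ 2 :=
          sq_sum_of_disjoint (fun j => a j * (gi j (x + Pi.single κ 1) - gi j x)) hd
      _ = ∑ j, a j ^ 2 * (gi j (x + Pi.single κ 1) - gi j x) ^ 2 :=
          Finset.sum_congr rfl fun j _ => by ring
  -- summability helpers
  have hgsupp : ∀ j : Fin i, ∀ x ∉ box d (c (Fin.castLE hik j)) W, gi j x = 0 := by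
    intro j x hx
    by_contra hc
    exact hx (hsupp _ x hc)
  have hsummand : ∀ (j : Fin i) (u : Site d → ℝ),
      (∀ x, gi j x = 0 → u x = 0) → Summable u := by
    intro j u hu
    apply summable_finsupp d (T := box d (c (Fin.castLE hik j)) W)
    intro x hx
    exact hu x (hgsupp j x hx)
  -- decouple tsums
  have hden : ∑' x, f x ^ 2 = ∑ j, a j ^ 2 * ∑' x, gi j x ^ 2 := by
    rw [tsum_congr hptsq, Summable.tsum_finsetSum (fun j _ => hsummand j _ (fun x hx => by rw [hx]; ring))]
    exact Finset.sum_congr rfl fun j _ => tsum_mul_left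
  have hgrad : dGradSq d f = ∑ j, a j ^ 2 * dGradSq d (gi j) := by
    rw [dGradSq]
    have hpt : ∀ x : Site d, (∑ κ : Fin d, (f (x + Pi.single κ 1) - f x) ^ 2)
        = ∑ j, a j ^ 2 * ∑ κ : Fin d, (gi j (x + Pi.single κ 1) - gi j x) ^ 2 := by
      intro x
      rw [Finset.sum_congr rfl (fun κ _ => hptdiff x κ), Finset.sum_comm]
      exact Finset.sum_congr rfl fun j _ => by rw [Finset.mul_sum]
    have hsumj : ∀ j : Fin i, Summable fun x =>
        a j ^ 2 * ∑ κ : Fin d, (gi j (x + Pi.single κ 1) - gi j x) ^ 2 := by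
      intro j
      apply summable_finsupp d (T := box d (c (Fin.castLE hik j)) W)
      intro x hx
      have : ∀ κ : Fin d, (gi j (x + Pi.single κ 1) - gi j x) ^ 2 = 0 := by
        intro κ
        rcases eq_or_ne (gi j (x + Pi.single κ 1) - gi j x) 0 with h | h
        · rw [h]; ring
        · exact absurd (hdiff _ x κ h) hx
      rw [Finset.sum_congr rfl (fun κ _ => this κ), Finset.sum_const, smul_zero, mul_zero]
    rw [tsum_congr hpt, Summable.tsum_finsetSum (fun j _ => hsumj j)]
    apply Finset.sum_congr rfl
    intro j _
    rw [tsum_mul_left, dGradSq]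
  have hpot : ∑' x, ξ x * f x ^ 2 = ∑ j, a j ^ 2 * ∑' x, ξ x * gi j x ^ 2 := by
    have hpt : ∀ x : Site d, ξ x * f x ^ 2 = ∑ j, a j ^ 2 * (ξ x * gi j x ^ 2) := by
      intro x
      rw [hptsq x, Finset.mul_sum]
      exact Finset.sum_congr rfl fun j _ => by ring
    rw [tsum_congr hpt,
      Summable.tsum_finsetSum (fun j _ => hsummand j _ (fun x hx => by rw [hx]; ring))]
    exact Finset.sum_congr rfl fun j _ => tsum_mul_left
  -- numerator bound
  set T : Finset (Site d) := Finset.univ.biUnion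
    (fun j : Fin i => box d (c (Fin.castLE hik j)) W) with hT
  have hfT : ∀ x ∉ T, f x = 0 := by
    intro x hx
    rw [ha x]
    apply Finset.sum_eq_zero
    intro j _
    have : x ∉ box d (c (Fin.castLE hik j)) W := by
      intro hc
      exact hx (Finset.mem_biUnion.2 ⟨j, Finset.mem_univ _, hc⟩)
    rw [hgsupp j x this]; ring
  apply dRayleigh_le_of d ε ξ B hfT hne
  rw [tsum_mul_Hop d ε ξ hfT, hgrad, hpot, hden, Finset.mul_sum, ← Finset.sum_add_distrib,
    Finset.mul_sum]
  apply Finset.sum_le_sum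
  intro j _
  have hnumj := hnum (Fin.castLE hik j)
  have ha2 : (0:ℝ) ≤ a j ^ 2 := sq_nonneg _
  calc (ε ^ 2)⁻¹ * (a j ^ 2 * dGradSq d (gi j)) + a j ^ 2 * ∑' x, ξ x * gi j x ^ 2
      = a j ^ 2 * ((ε ^ 2)⁻¹ * dGradSq d (gi j) + ∑' x, ξ x * gi j x ^ 2) := by ring
    _ ≤ a j ^ 2 * (B * ∑' x, gi j x ^ 2) := mul_le_mul_of_nonneg_left hnumj ha2
    _ = B * (a j ^ 2 * ∑' x, gi j x ^ 2) := by ring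

end Master

section Geometry

lemma compl_nonempty {D : Set (Fin d → ℝ)} (hd : 1 ≤ d) (hbd : Bornology.IsBounded D)
    (x₀ : Fin d → ℝ) : Dᶜ.Nonempty := by
  obtain ⟨R, hR⟩ := hbd.subset_closedBall x₀
  set R' : ℝ := max R 0 with hR'
  set i0 : Fin d := ⟨0, hd⟩
  refine ⟨fun i => x₀ i + (R' + 1), fun hy => ?_⟩
  have h1 := hR hy
  rw [Metric.mem_closedBall] at h1
  have h2 : dist ((fun i => x₀ i + (R' + 1)) i0) (x₀ i0)
      ≤ dist (fun i : Fin d => x₀ i + (R' + 1)) x₀ :=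
    dist_le_pi_dist (fun i : Fin d => x₀ i + (R' + 1)) x₀ i0
  rw [Real.dist_eq] at h2
  have h3 : |x₀ i0 + (R' + 1) - x₀ i0| = R' + 1 := by
    have : (0:ℝ) ≤ R' := le_max_right _ _
    rw [abs_of_nonneg (by linarith)]
    ring
  rw [h3] at h2
  have h4 : R ≤ R' := le_max_left _ _
  have : (0:ℝ) ≤ R' := le_max_right _ _
  linarith

lemma tents_exist {D : Set (Fin d → ℝ)} (hd : 1 ≤ d) (hD : NiceDomain d D) (k : ℕ) :
    ∃ s : ℝ, 0 < s ∧ ∀ ε : ℝ, 0 < ε → ε ≤ s / 2 → ∀ W : ℕ, ε * W ≤ s →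
      ∃ c : Fin k → Site d,
        (∀ j j' : Fin k, ∀ x : Site d, x ∈ box d (c j) W → x ∈ box d (c j') W → j = j') ∧
        (∀ j : Fin k, ↑(box d (c j) W) ⊆ Deps d D ε) := by
  obtain ⟨x₀, hx₀⟩ := hD.nonempty
  obtain ⟨rr, hrr, hball⟩ := Metric.isOpen_iff.1 hD.isOpen x₀ hx₀
  set ρ : ℝ := rr / 4 with hρ
  have hρpos : 0 < ρ := by positivity
  have hcb : Metric.closedBall x₀ (2*ρ) ⊆ D := by
    refine subset_trans (Metric.closedBall_subset_ball ?_) hball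
    rw [hρ]; linarith
  have hcN : Dᶜ.Nonempty := compl_nonempty d hd hD.bounded x₀
  set s : ℝ := ρ / (2*(2*(k:ℝ)+1)) with hs
  have hspos : 0 < s := by
    have : (0:ℝ) < 2*(2*(k:ℝ)+1) := by positivity
    exact div_pos hρpos this
  refine ⟨s, hspos, ?_⟩
  intro ε hε hεs W hεW
  set i0 : Fin d := ⟨0, hd⟩
  set c0 : Site d := fun i => ⌊x₀ i / ε⌋ with hc0
  set c : Fin k → Site d := fun j => fun i => c0 i + (if i = i0 then (j:ℤ)*(2*W+2) else 0)
    with hc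
  refine ⟨c, ?_, ?_⟩
  · intro j j' x hj hj'
    have h1 : ((x - c j) i0).natAbs ≤ W := le_trans (le_nrmN d _ i0) ((mem_box d).1 hj)
    have h2 : ((x - c j') i0).natAbs ≤ W := le_trans (le_nrmN d _ i0) ((mem_box d).1 hj')
    have e1 : (x - c j) i0 = x i0 - c0 i0 - (j:ℤ)*(2*W+2) := by
      simp only [Pi.sub_apply, hc, eq_self_iff_true, if_true]; ring
    have e2 : (x - c j') i0 = x i0 - c0 i0 - (j':ℤ)*(2*W+2) := by
      simp only [Pi.sub_apply, hc, eq_self_iff_true, if_true]; ring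
    by_contra hne
    have h1' : |(x - c j) i0| ≤ (W:ℤ) := by
      rw [Int.abs_eq_natAbs]; exact_mod_cast h1
    have h2' : |(x - c j') i0| ≤ (W:ℤ) := by
      rw [Int.abs_eq_natAbs]; exact_mod_cast h2
    have hdiffeq : (x - c j') i0 - (x - c j) i0 = ((j:ℤ) - (j':ℤ)) * (2*W+2) := by
      rw [e1, e2]; ring
    have habs : |((j:ℤ) - (j':ℤ)) * (2*W+2)| ≤ 2*W := by
      rw [← hdiffeq]
      calc |(x - c j') i0 - (x - c j) i0| ≤ |(x - c j') i0| + |(x - c j) i0| := abs_sub _ _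
        _ ≤ 2*W := by linarith
    have hne' : (j:ℤ) - (j':ℤ) ≠ 0 := by
      intro hcon
      apply hne
      apply Fin.ext
      have : (j:ℤ) = (j':ℤ) := by linarith [sub_eq_zero.1 hcon]
      exact_mod_cast this
    have h1abs : 1 ≤ |(j:ℤ) - (j':ℤ)| := Int.one_le_abs hne'
    have hlow : (2*(W:ℤ)+2) ≤ |((j:ℤ) - (j':ℤ)) * (2*W+2)| := by
      rw [abs_mul, abs_of_nonneg (by positivity : (0:ℤ) ≤ 2*(W:ℤ)+2)]
      nlinarith
    linarith
  · intro j x hx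
    have hnrm : nrmN d (x - c j) ≤ W := (mem_box d).1 (Finset.mem_coe.1 hx)
    have hkj : ((j:ℕ):ℝ) ≤ (k:ℝ) := by
      exact_mod_cast le_of_lt j.2
    have hdistx : dist (emb d ε x) x₀ ≤ ρ := by
      rw [dist_pi_le_iff hρpos.le]
      intro i
      have b1 : |((x i : ℝ)) - (c j i : ℝ)| ≤ (W:ℝ) := by
        have hn : ((x - c j) i).natAbs ≤ W := le_trans (le_nrmN d _ i) hnrm
        have hn' : |(x - c j) i| ≤ (W:ℤ) := by
          rw [Int.abs_eq_natAbs]; exact_mod_cast hn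
        have heq : ((x - c j) i : ℤ) = x i - c j i := rfl
        rw [heq] at hn'
        have : ((|x i - c j i| : ℤ) : ℝ) ≤ ((W:ℤ) : ℝ) := Int.cast_le.2 hn'
        push_cast at this
        exact this
      have b2 : |(c j i : ℝ) - (c0 i : ℝ)| ≤ (k:ℝ)*(2*(W:ℝ)+2) := by
        have : c j i - c0 i = (if i = i0 then (j:ℤ)*(2*W+2) else 0) := by
          simp [hc]
        have hcast : (c j i : ℝ) - (c0 i : ℝ) = ((c j i - c0 i : ℤ) : ℝ) := by push_cast; ring
        rw [hcast, this]
        by_cases hii : i = i0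
        · rw [if_pos hii]
          push_cast
          rw [abs_of_nonneg (by positivity)]
          have h2W : (0:ℝ) ≤ 2*(W:ℝ)+2 := by positivity
          exact mul_le_mul_of_nonneg_right hkj h2W
        · rw [if_neg hii]
          simp
          positivity
      have b3 : |ε * (c0 i : ℝ) - x₀ i| ≤ ε := by
        have hfl : (⌊x₀ i / ε⌋ : ℝ) ≤ x₀ i / ε := Int.floor_le _
        have hfl2 : x₀ i / ε - 1 < (⌊x₀ i / ε⌋ : ℝ) := by
          have := Int.lt_floor_add_one (x₀ i / ε)
          linarith
        have hc0i : (c0 i : ℝ) = (⌊x₀ i / ε⌋ : ℝ) := by rw [hc0]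
        have hεx : ε * (x₀ i / ε) = x₀ i := by field_simp
        have k1 : ε * (x₀ i / ε - 1) < ε * (⌊x₀ i / ε⌋ : ℝ) := mul_lt_mul_of_pos_left hfl2 hε
        have k2 : ε * (⌊x₀ i / ε⌋ : ℝ) ≤ ε * (x₀ i / ε) := mul_le_mul_of_nonneg_left hfl hε.le
        rw [mul_sub, mul_one, hεx] at k1
        rw [hεx] at k2
        rw [hc0i, abs_le]
        constructor
        · linarith
        · linarith
      have hemb : emb d ε x i = ε * (x i : ℝ) := rfl
      rw [Real.dist_eq, hemb]
      have tri : |ε * (x i:ℝ) - x₀ i| ≤ |ε * (x i:ℝ) - ε * (c j i : ℝ)|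
          + |ε * (c j i:ℝ) - ε * (c0 i : ℝ)| + |ε * (c0 i:ℝ) - x₀ i| := by
        have t1 := abs_sub_le (ε * (x i:ℝ)) (ε * (c j i:ℝ)) (x₀ i)
        have t2 := abs_sub_le (ε * (c j i:ℝ)) (ε * (c0 i:ℝ)) (x₀ i)
        linarith
      have m1 : |ε * (x i:ℝ) - ε * (c j i : ℝ)| ≤ ε * W := by
        rw [← mul_sub, abs_mul, abs_of_pos hε]
        exact mul_le_mul_of_nonneg_left b1 hε.le
      have m2 : |ε * (c j i:ℝ) - ε * (c0 i : ℝ)| ≤ ε * ((k:ℝ)*(2*(W:ℝ)+2)) := by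
        rw [← mul_sub, abs_mul, abs_of_pos hε]
        exact mul_le_mul_of_nonneg_left b2 hε.le
      have hρeq : s * (2*(2*(k:ℝ)+1)) = ρ := by
        rw [hs]; field_simp
      have hεW' : ε * (W:ℝ) ≤ s := hεW
      have hεs' : ε ≤ s/2 := hεs
      calc |ε * (x i:ℝ) - x₀ i| ≤ ε*W + ε * ((k:ℝ)*(2*(W:ℝ)+2)) + ε := by linarith
        _ = (2*(k:ℝ)+1) * (ε*W) + (2*(k:ℝ)+1) * ε := by ring
        _ ≤ (2*(k:ℝ)+1) * s + (2*(k:ℝ)+1) * (s/2) := by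
            have hk0 : (0:ℝ) ≤ 2*(k:ℝ)+1 := by positivity
            have := mul_le_mul_of_nonneg_left hεW' hk0
            have := mul_le_mul_of_nonneg_left hεs' hk0
            nlinarith
        _ ≤ ρ := by nlinarith
    have hfar : ∀ z ∈ Dᶜ, ρ ≤ dist (emb d ε x) z := by
      intro z hz
      have hz2 : 2*ρ < dist z x₀ := by
        by_contra hcon
        push_neg at hcon
        exact hz (hcb (Metric.mem_closedBall.2 hcon))
      have tri := dist_triangle z (emb d ε x) x₀
      have : dist z (emb d ε x) = dist (emb d ε x) z := dist_comm _ _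
      linarith
    have hinf : ρ ≤ Metric.infDist (emb d ε x) Dᶜ := by
      by_contra hcon
      push_neg at hcon
      obtain ⟨z, hz, hdz⟩ := (Metric.infDist_lt_iff hcN).1 hcon
      exact absurd (hfar z hz) (by linarith)
    have hsρ : s ≤ ρ / 2 := by
      rw [hs]
      rw [div_le_div_iff₀ (by positivity) (by norm_num)]
      nlinarith
    have hερ : ε < ρ := by linarith
    show ε < Metric.infDist (emb d ε x) Dᶜ
    linarith

end Geometry

section Moment

lemma rpow_le_one_add_rpow {t r K : ℝ} (hr : 0 ≤ r) (hrK : r ≤ K) :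
    |t| ^ r ≤ 1 + |t| ^ K := by
  rcases le_or_gt (|t|) 1 with h | h
  · have h1 : |t| ^ r ≤ 1 := Real.rpow_le_one (abs_nonneg t) h hr
    have h2 : (0:ℝ) ≤ |t| ^ K := Real.rpow_nonneg (abs_nonneg t) K
    linarith
  · have h1 : |t| ^ r ≤ |t| ^ K := Real.rpow_le_rpow_of_exponent_le h.le hrK
    linarith

lemma momentSup_bounded {Ω : Type*} [MeasurableSpace Ω] (P : Measure Ω)
    [IsProbabilityMeasure P] {D : Set (Fin d → ℝ)} (ξf : ℝ → Ω → Site d → ℝ)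
    {K : ℝ} {U : (Fin d → ℝ) → ℝ} (hA1 : Assumption1 d P D ξf K U)
    {r : ℝ} (hr0 : 0 ≤ r) (hrK : r ≤ K) :
    ∃ M₀ : ℝ, 0 ≤ M₀ ∧ ∀ ε ∈ Set.Ioo (0:ℝ) 1, momentSup d P D ξf ε r ≤ M₀ := by
  obtain ⟨C, hC⟩ := hA1.moment
  refine ⟨max 0 (1 + max C 0), le_max_left _ _, ?_⟩
  intro ε hε
  apply Real.iSup_le _ (le_max_left _ _)
  intro x
  refine le_trans ?_ (le_max_right 0 _)
  set F : Ω → ℝ := fun ω => |ξf ε ω (x : Site d)| ^ r with hF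
  have hFnn : ∀ ω, 0 ≤ F ω := fun ω => Real.rpow_nonneg (abs_nonneg _) r
  by_cases hint : Integrable F P
  · rw [integral_eq_lintegral_of_nonneg_ae (Filter.Eventually.of_forall hFnn)
      hint.aestronglyMeasurable]
    have hb : ∫⁻ ω, ENNReal.ofReal (F ω) ∂P ≤ ENNReal.ofReal (1 + max C 0) := by
      have step1 : ∫⁻ ω, ENNReal.ofReal (F ω) ∂P
          ≤ ∫⁻ ω, (1 + ENNReal.ofReal (|ξf ε ω (x : Site d)| ^ K)) ∂P := by
        apply lintegral_mono
        intro ω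
        have hpt : F ω ≤ 1 + |ξf ε ω (x : Site d)| ^ K := rpow_le_one_add_rpow hr0 hrK
        calc ENNReal.ofReal (F ω)
            ≤ ENNReal.ofReal (1 + |ξf ε ω (x : Site d)| ^ K) := ENNReal.ofReal_le_ofReal hpt
          _ = ENNReal.ofReal 1 + ENNReal.ofReal (|ξf ε ω (x : Site d)| ^ K) :=
              ENNReal.ofReal_add (by norm_num) (Real.rpow_nonneg (abs_nonneg _) K)
          _ = 1 + ENNReal.ofReal (|ξf ε ω (x : Site d)| ^ K) := by rw [ENNReal.ofReal_one]
      have step2 : ∫⁻ ω, (1 + ENNReal.ofReal (|ξf ε ω (x : Site d)| ^ K)) ∂P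
          = 1 + ∫⁻ ω, ENNReal.ofReal (|ξf ε ω (x : Site d)| ^ K) ∂P := by
        rw [lintegral_add_left measurable_const]
        simp [measure_univ]
      have step3 : ∫⁻ ω, ENNReal.ofReal (|ξf ε ω (x : Site d)| ^ K) ∂P ≤ ENNReal.ofReal C :=
        hC ε hε (x : Site d) x.2
      calc ∫⁻ ω, ENNReal.ofReal (F ω) ∂P
          ≤ 1 + ∫⁻ ω, ENNReal.ofReal (|ξf ε ω (x : Site d)| ^ K) ∂P := by
            rw [← step2]; exact step1
        _ ≤ 1 + ENNReal.ofReal C := add_le_add_right step3 _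
        _ ≤ ENNReal.ofReal (1 + max C 0) := by
            rw [ENNReal.ofReal_add (by norm_num) (le_max_right C 0), ENNReal.ofReal_one]
            exact add_le_add_right (ENNReal.ofReal_le_ofReal (le_max_left C 0)) _
    calc (∫⁻ ω, ENNReal.ofReal (F ω) ∂P).toReal
        ≤ (ENNReal.ofReal (1 + max C 0)).toReal := by
          apply ENNReal.toReal_mono _ hb
          exact ENNReal.ofReal_ne_top
      _ ≤ 1 + max C 0 := by
          have h0 : (0:ℝ) ≤ 1 + max C 0 := by
            have := le_max_right C 0; linarith
          rw [ENNReal.toReal_ofReal h0]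
  · rw [integral_undef hint]
    have : (0:ℝ) ≤ max C 0 := le_max_right _ _
    linarith

end Moment

end AndersonCLT
end

set_option maxHeartbeats 1000000

open AndersonCLT in
/-- Corollary 2.5: on `E_{k,ε,γ}`, for truncated potentials, the sum of the first `k`
discrete eigenvalues is bounded above by a constant `c_{k,γ}`, uniformly in `ε ∈ (0,1)`. -/
theorem sum_eigenvalues_bounded_on_Eevent
    {d : ℕ} (hd : 1 ≤ d) {D : Set (Fin d → ℝ)} (hD : NiceDomain d D)
    {Ω : Type*} [MeasurableSpace Ω] (P : Measure Ω) [IsProbabilityMeasure P]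
    (ξf : ℝ → Ω → Site d → ℝ) (K : ℝ) (U : (Fin d → ℝ) → ℝ)
    (hA1 : Assumption1 d P D ξf K U)
    (κ : ℝ) (hκ : κ ∈ Set.Ioo ((d : ℝ) / K) (min (d : ℝ) 2))
    (r : ℝ) (hr : r ∈ Set.Ioo (max 1 ((d : ℝ) / 2)) ((d : ℝ) / κ))
    (htrunc : TruncBound d D ξf κ)
    (φ : ℕ → (Fin d → ℝ) → ℝ)
    (hφ : ∀ j, 1 ≤ j → IsCtsEigenfun d D U (cEvalk d D U j) (φ j))
    (k : ℕ) (hk : 1 ≤ k) (γ : ℝ) (hγ : 0 < γ) :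
    ∃ c : ℝ, ∀ ε ∈ Set.Ioo (0 : ℝ) 1, ∀ ξ0 : Site d → ℝ,
      (∀ x ∈ Deps d D ε, |ξ0 x| ≤ ε ^ (-κ)) →
      ξ0 ∈ Eevent d D U φ ε γ r (momentSup d P D ξf ε r) k →
      LambdaEps d D ε ξ0 k ≤ c := by
  obtain ⟨s, hspos, htents⟩ := tents_exist d hd hD k
  have hK1 : (1:ℝ) < K := lt_of_le_of_lt (le_max_left _ _) hA1.hK
  have hK0 : (0:ℝ) < K := by linarith
  have hd0 : (0:ℝ) < d := by exact_mod_cast hd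
  have hκ0 : 0 < κ := lt_trans (div_pos hd0 hK0) hκ.1
  have hκ2 : κ ≤ 2 := le_of_lt (lt_of_lt_of_le hκ.2 (min_le_right _ _))
  have hr1 : (1:ℝ) < r := lt_of_le_of_lt (le_max_left _ _) hr.1
  have hr0 : (0:ℝ) ≤ r := by linarith
  have hrK : r ≤ K := by
    have h1 : (d:ℝ)/K < κ := hκ.1
    have h2 : (d:ℝ) < κ * K := (div_lt_iff₀ hK0).1 h1
    have h3 : (d:ℝ)/κ < K := by
      rw [div_lt_iff₀ hκ0]
      nlinarith
    linarith [hr.2]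
  obtain ⟨M₀, hM₀, hMbd⟩ := momentSup_bounded d P ξf hA1 hr0 hrK
  have hvol0 : (0:ℝ) ≤ (volume D).toReal := ENNReal.toReal_nonneg
  set MM : ℝ := (4 * (volume D).toReal * M₀) ^ r with hMM
  have hMM0 : 0 ≤ MM := Real.rpow_nonneg (by positivity) r
  set B1 : ℝ := 4*(4*(d:ℝ)*3^d/s^2 + MM*(2/s)^d + 3^d) with hB1
  have hB10 : 0 ≤ B1 := by positivity
  have hsk : (0:ℝ) < (s/2)^κ := Real.rpow_pos_of_pos (by positivity) κ
  set CL : ℝ := 4*(d:ℝ)*((s/2)^2)⁻¹ + ((s/2)^κ)⁻¹ with hCL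
  have hCL0 : 0 ≤ CL := by
    rw [hCL]
    have h1 : (0:ℝ) ≤ ((s/2)^κ)⁻¹ := by positivity
    have h2 : (0:ℝ) ≤ 4*(d:ℝ)*((s/2)^2)⁻¹ := by positivity
    linarith
  refine ⟨(k:ℝ) * max CL B1, ?_⟩
  intro ε hε ξ0 htr hE
  have hεpos : 0 < ε := hε.1
  have hε1 : ε < 1 := hε.2
  have hbound : ∀ i ∈ Finset.Icc 1 k, evalk d D ε ξ0 i ≤ max CL B1 := by
    intro i hi
    rcases le_or_gt ε (s/2) with hcase | hcase
    · -- small ε: tent construction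
      refine le_trans ?_ (le_max_right CL B1)
      set W : ℕ := ⌊s/ε⌋₊ with hWdef
      have hW1 : 1 ≤ W := by
        apply Nat.le_floor
        rw [Nat.cast_one, le_div_iff₀ hεpos]
        linarith
      have hWR : (1:ℝ) ≤ (W:ℝ) := by exact_mod_cast hW1
      have hεWle : ε * W ≤ s := by
        have hfl := Nat.floor_le (by positivity : (0:ℝ) ≤ s/ε)
        calc ε * W ≤ ε * (s/ε) := mul_le_mul_of_nonneg_left hfl hεpos.le
          _ = s := by field_simp
      have hεWge : s/2 ≤ ε * W := by
        have hfl := Nat.lt_floor_add_one (s/ε)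
        have h2 : ε * (s/ε) < ε * ((W:ℝ) + 1) := mul_lt_mul_of_pos_left hfl hεpos
        have h3 : ε * (s/ε) = s := by field_simp
        rw [h3, mul_add, mul_one] at h2
        linarith
      obtain ⟨c, hsep, hsub⟩ := htents ε hεpos hcase W hεWle
      -- bound on the masked potential
      have hrne : r ≠ 0 := by linarith
      have hS0 : (0:ℝ) ≤ ∑' x, |(fun y => if y ∈ Deps d D ε then ξ0 y else 0) x| ^ r :=
        tsum_nonneg fun x => Real.rpow_nonneg (abs_nonneg _) r
      have hεd : (0:ℝ) < ε^d := by positivity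
      have hbase : (0:ℝ) ≤ ε^d * ∑' x, |(fun y => if y ∈ Deps d D ε then ξ0 y else 0) x| ^ r :=
        mul_nonneg hεd.le hS0
      have heq : (eNorm d ε r (fun y => if y ∈ Deps d D ε then ξ0 y else 0)) ^ r
          = ε^d * ∑' x, |(fun y => if y ∈ Deps d D ε then ξ0 y else 0) x| ^ r := by
        rw [eNorm, ← Real.rpow_mul hbase, one_div_mul_cancel hrne, Real.rpow_one]
      have hEnorm := hE.2
      have hlt : (eNorm d ε r (fun y => if y ∈ Deps d D ε then ξ0 y else 0)) ^ r ≤ MM := by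
        have h1 : eNorm d ε r (fun y => if y ∈ Deps d D ε then ξ0 y else 0)
            ≤ 4*(volume D).toReal*(momentSup d P D ξf ε r) := le_of_lt hEnorm
        have h2 : (0:ℝ) ≤ eNorm d ε r (fun y => if y ∈ Deps d D ε then ξ0 y else 0) :=
          Real.rpow_nonneg hbase _
        have h3 : 4*(volume D).toReal*(momentSup d P D ξf ε r) ≤ 4*(volume D).toReal*M₀ :=
          mul_le_mul_of_nonneg_left (hMbd ε hε) (by positivity)
        calc (eNorm d ε r (fun y => if y ∈ Deps d D ε then ξ0 y else 0))^r
            ≤ (4*(volume D).toReal*M₀)^r := Real.rpow_le_rpow h2 (le_trans h1 h3) hr0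
          _ = MM := hMM.symm
      have hmaskbd : ∑' x, |(fun y => if y ∈ Deps d D ε then ξ0 y else 0) x| ^ r
          ≤ (ε^d)⁻¹ * MM := by
        rw [heq] at hlt
        calc ∑' x, |(fun y => if y ∈ Deps d D ε then ξ0 y else 0) x| ^ r
            = (ε^d)⁻¹ * (ε^d * ∑' x, |(fun y => if y ∈ Deps d D ε then ξ0 y else 0) x| ^ r) := by
              field_simp
          _ ≤ (ε^d)⁻¹ * MM := mul_le_mul_of_nonneg_left hlt (by positivity)
      -- numeric inequalities
      have e2 : (ε^2)⁻¹ ≤ 4*(W:ℝ)^2/s^2 := by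
        rw [inv_eq_one_div, div_le_div_iff₀ (by positivity) (by positivity)]
        nlinarith
      have e3 : (ε^d)⁻¹ ≤ (2/s)^d * (W:ℝ)^d := by
        have h3a : (s/2)^d ≤ ε^d * (W:ℝ)^d := by
          rw [← mul_pow]
          exact pow_le_pow_left₀ (by positivity) hεWge d
        have h3b : (ε^d * (W:ℝ)^d)⁻¹ ≤ ((s/2)^d)⁻¹ :=
          inv_anti₀ (by positivity) h3a
        have h3c : (ε^d)⁻¹ = (W:ℝ)^d * (ε^d * (W:ℝ)^d)⁻¹ := by
          field_simp
        rw [h3c]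
        calc (W:ℝ)^d * (ε^d * (W:ℝ)^d)⁻¹ ≤ (W:ℝ)^d * ((s/2)^d)⁻¹ :=
              mul_le_mul_of_nonneg_left h3b (by positivity)
          _ = (2/s)^d * (W:ℝ)^d := by
              rw [← inv_pow, inv_div]
              ring
      have e4 : ((2*(W:ℝ)+1))^d ≤ 3^d * (W:ℝ)^d := by
        rw [← mul_pow]
        exact pow_le_pow_left₀ (by positivity) (by linarith) d
      -- per-tent numerator bound
      have hnum : ∀ j : Fin k,
          (ε ^ 2)⁻¹ * dGradSq d (tent d W (c j)) + ∑' x, ξ0 x * tent d W (c j) x ^ 2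
            ≤ B1 * ∑' x, tent d W (c j) x ^ 2 := by
        intro j
        have hq := dGradSq_tent_le d (W := W) (c := c j)
        have hp := tent_pot_le d (le_of_lt hr1) (Deps_finite d hD.bounded hεpos)
          (hsub j) hmaskbd
        have hn := tent_l2_ge d (c := c j) hW1
        have t1 : (ε^2)⁻¹ * ((d:ℝ)*(2*(W:ℝ)+1)^d) ≤ (4*(d:ℝ)*3^d/s^2)*((W:ℝ)^d*(W:ℝ)^2) := by
          calc (ε^2)⁻¹ * ((d:ℝ)*(2*(W:ℝ)+1)^d)
              ≤ (4*(W:ℝ)^2/s^2) * ((d:ℝ)*(3^d*(W:ℝ)^d)) := by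
                apply mul_le_mul e2 (mul_le_mul_of_nonneg_left e4 (by positivity))
                  (by positivity) (by positivity)
            _ = (4*(d:ℝ)*3^d/s^2)*((W:ℝ)^d*(W:ℝ)^2) := by ring
        have t2 : (W:ℝ)^2*((ε^d)⁻¹*MM) ≤ (MM*(2/s)^d)*((W:ℝ)^d*(W:ℝ)^2) := by
          calc (W:ℝ)^2*((ε^d)⁻¹*MM) ≤ (W:ℝ)^2*(((2/s)^d * (W:ℝ)^d)*MM) := by
                apply mul_le_mul_of_nonneg_left (mul_le_mul_of_nonneg_right e3 hMM0)
                  (by positivity)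
            _ = (MM*(2/s)^d)*((W:ℝ)^d*(W:ℝ)^2) := by ring
        have t3 : (W:ℝ)^2*(2*(W:ℝ)+1)^d ≤ 3^d*((W:ℝ)^d*(W:ℝ)^2) := by
          calc (W:ℝ)^2*(2*(W:ℝ)+1)^d ≤ (W:ℝ)^2*(3^d*(W:ℝ)^d) :=
                mul_le_mul_of_nonneg_left e4 (by positivity)
            _ = 3^d*((W:ℝ)^d*(W:ℝ)^2) := by ring
        have hpot' : ∑' x, ξ0 x * tent d W (c j) x ^ 2
            ≤ (W:ℝ)^2 * ((ε^d)⁻¹ * MM + (2*(W:ℝ)+1)^d) :=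
          le_trans (le_abs_self _) hp
        have hgr : (ε^2)⁻¹ * dGradSq d (tent d W (c j))
            ≤ (ε^2)⁻¹ * ((d:ℝ)*(2*(W:ℝ)+1)^d) :=
          mul_le_mul_of_nonneg_left hq (by positivity)
        calc (ε ^ 2)⁻¹ * dGradSq d (tent d W (c j)) + ∑' x, ξ0 x * tent d W (c j) x ^ 2
            ≤ (4*(d:ℝ)*3^d/s^2 + MM*(2/s)^d + 3^d) * ((W:ℝ)^d*(W:ℝ)^2) := by
              have expand : (W:ℝ)^2 * ((ε^d)⁻¹ * MM + (2*(W:ℝ)+1)^d)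
                  = (W:ℝ)^2*((ε^d)⁻¹*MM) + (W:ℝ)^2*(2*(W:ℝ)+1)^d := by ring
              rw [expand] at hpot'
              have final : (4*(d:ℝ)*3^d/s^2)*((W:ℝ)^d*(W:ℝ)^2)
                  + ((MM*(2/s)^d)*((W:ℝ)^d*(W:ℝ)^2) + 3^d*((W:ℝ)^d*(W:ℝ)^2))
                  = (4*(d:ℝ)*3^d/s^2 + MM*(2/s)^d + 3^d) * ((W:ℝ)^d*(W:ℝ)^2) := by ring
              linarith
          _ = B1 * ((W:ℝ)^d * ((W:ℝ)/2)^2) := by rw [hB1]; ring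
          _ ≤ B1 * ∑' x, tent d W (c j) x ^ 2 := mul_le_mul_of_nonneg_left hn hB10
      exact evalk_le_of_tents d hW1 hB10 (Finset.mem_Icc.1 hi).2 c hsep hsub hnum
    · -- large ε: crude bound
      refine le_trans ?_ (le_max_left CL B1)
      apply evalk_le_forall d hCL0
      intro f hvan hne
      refine le_trans (dRayleigh_le_crude d hεpos hD.bounded htr f hvan hne) ?_
      have c1 : (ε^2)⁻¹ ≤ ((s/2)^2)⁻¹ := by
        apply inv_anti₀ (by positivity)
        nlinarith
      have c2 : ε^(-κ) ≤ ((s/2)^κ)⁻¹ := by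
        rw [Real.rpow_neg hεpos.le]
        apply inv_anti₀ hsk
        exact Real.rpow_le_rpow (by positivity) hcase.le (le_of_lt hκ0)
      rw [hCL]
      have hc1' : 4*(d:ℝ)*(ε^2)⁻¹ ≤ 4*(d:ℝ)*((s/2)^2)⁻¹ :=
        mul_le_mul_of_nonneg_left c1 (by positivity)
      linarith
  rw [LambdaEps]
  calc ∑ i ∈ Finset.Icc 1 k, evalk d D ε ξ0 i
      ≤ (Finset.Icc 1 k).card • max CL B1 :=
        Finset.sum_le_card_nsmul _ _ _ hbound
    _ = (k:ℝ) * max CL B1 := by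
        rw [Nat.card_Icc, nsmul_eq_mul]
        norm_num
end

section
/- There is a constant C(d) < ∞ such that for any p ∈ (1,2), any L ∈ ℕ, and any finitely supported f : ℤ^d → ℝ, ‖f² − f_L²‖_p ≤ C(d)·L·‖∇^d f‖_2·‖f‖_{2p/(2−p)}, where all norms are unscaled ℓ^p-norms on ℤ^d. -/
open MeasureTheory ProbabilityTheory Filter Set
attribute [local instance] Classical.propDecidable
open scoped NNReal ENNReal Topology

section BlockAux

open AndersonCLT Finset

variable {d L : ℕ}

lemma int_fdiv_bounds (hL : 1 ≤ L) (a : ℤ) :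
    (L : ℤ) * (a.fdiv L) ≤ a ∧ a < (L : ℤ) * (a.fdiv L) + L := by
  have hL' : (0:ℤ) < (L:ℤ) := by exact_mod_cast hL
  rw [Int.fdiv_eq_ediv_of_nonneg _ hL'.le]
  have h1 := Int.mul_ediv_add_emod a (L:ℤ)
  have h2 := Int.emod_nonneg a (by positivity : ((L:ℤ)) ≠ 0)
  have h3 := Int.emod_lt_of_pos a hL'
  omega

lemma int_fdiv_eq (hL : 1 ≤ L) {q a : ℤ} (h1 : (L:ℤ) * q ≤ a) (h2 : a < (L:ℤ) * q + L) :
    a.fdiv L = q := by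
  obtain ⟨g1, g2⟩ := int_fdiv_bounds hL a
  have hL' : (0:ℤ) < (L:ℤ) := by exact_mod_cast hL
  have e1 : (L:ℤ) * (a.fdiv L) < (L:ℤ) * (q + 1) := by
    have : (L:ℤ) * (q+1) = (L:ℤ) * q + L := by ring
    linarith
  have e2 : (L:ℤ) * q < (L:ℤ) * ((a.fdiv L) + 1) := by
    have : (L:ℤ) * (a.fdiv L + 1) = (L:ℤ) * (a.fdiv L) + L := by ring
    linarith
  have e1' := lt_of_mul_lt_mul_left e1 hL'.le
  have e2' := lt_of_mul_lt_mul_left e2 hL'.le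
  omega

lemma mem_blockOf_iff {x z : Site d} :
    z ∈ blockOf d L x ↔
      ∀ i, (L:ℤ) * ((x i).fdiv L) ≤ z i ∧ z i < (L:ℤ) * ((x i).fdiv L) + L := by
  simp [blockOf, Fintype.mem_piFinset, Finset.mem_Ico]

lemma mem_blockOf_iff_fdiv (hL : 1 ≤ L) {x z : Site d} :
    z ∈ blockOf d L x ↔ ∀ i, (z i).fdiv L = (x i).fdiv L := by
  rw [mem_blockOf_iff]
  constructor
  · intro h i; exact int_fdiv_eq hL (h i).1 (h i).2
  · intro h i; rw [← h i]; exact int_fdiv_bounds hL (z i)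

lemma self_mem_blockOf (hL : 1 ≤ L) (x : Site d) : x ∈ blockOf d L x :=
  (mem_blockOf_iff_fdiv hL).2 fun _ => rfl

lemma blockOf_eq_of_mem (hL : 1 ≤ L) {x z : Site d} (h : z ∈ blockOf d L x) :
    blockOf d L z = blockOf d L x := by
  have hf := (mem_blockOf_iff_fdiv hL).1 h
  ext w
  rw [mem_blockOf_iff_fdiv hL, mem_blockOf_iff_fdiv hL]
  exact forall_congr' fun i => by rw [hf i]

lemma card_blockOf (x : Site d) : (blockOf d L x).card = L ^ d := by
  rw [blockOf, Fintype.card_piFinset]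
  have : ∀ i : Fin d, (Finset.Ico ((L:ℤ) * ((x i).fdiv L)) ((L:ℤ) * ((x i).fdiv L) + L)).card
      = L := by
    intro i
    rw [Int.card_Ico]
    simp
  simp only [this, Finset.prod_const, Finset.card_univ, Fintype.card_fin]

lemma blockAvg_eq_of_mem (hL : 1 ≤ L) (f : Site d → ℝ) {x z : Site d}
    (h : z ∈ blockOf d L x) : blockAvg d L f z = blockAvg d L f x := by
  unfold blockAvg
  rw [blockOf_eq_of_mem hL h]

lemma update_mem_blockOf (hL : 1 ≤ L) {x₀ x : Site d} (hx : x ∈ blockOf d L x₀) (K : Fin d)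
    {t : ℤ} (ht1 : (L:ℤ) * ((x₀ K).fdiv L) ≤ t) (ht2 : t < (L:ℤ) * ((x₀ K).fdiv L) + L) :
    Function.update x K t ∈ blockOf d L x₀ := by
  rw [mem_blockOf_iff] at hx ⊢
  intro i
  rcases eq_or_ne i K with rfl | h
  · simpa using ⟨ht1, ht2⟩
  · simpa [Function.update_of_ne h] using hx i

lemma telescope_int (g : ℤ → ℝ) (a : ℤ) (n : ℕ) :
    g (a + n) - g a = ∑ t ∈ Finset.Ico a (a + (n:ℤ)), (g (t+1) - g t) := by
  induction n with
  | zero => simp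
  | succ n ih =>
    have h1 : ((n+1 : ℕ) : ℤ) = (n:ℤ) + 1 := by push_cast; ring
    rw [h1]
    have hins : Finset.Ico a (a + ((n:ℤ)+1)) = insert (a + n) (Finset.Ico a (a+(n:ℤ))) := by
      ext t; simp only [Finset.mem_Ico, Finset.mem_insert]; omega
    rw [hins, Finset.sum_insert (by simp [Finset.mem_Ico]), ← ih]
    have h2 : a + ((n:ℤ)+1) = (a + (n:ℤ)) + 1 := by ring
    rw [h2]; ring

lemma oneD_abs_bound (g : ℤ → ℝ) {b c s t : ℤ} (hs1 : b ≤ s) (hs2 : s < c)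
    (ht1 : b ≤ t) (ht2 : t < c) :
    |g s - g t| ≤ ∑ u ∈ Finset.Ico b (c - 1), |g (u+1) - g u| := by
  have key : ∀ s t : ℤ, b ≤ s → s ≤ t → t < c →
      |g t - g s| ≤ ∑ u ∈ Finset.Ico b (c - 1), |g (u+1) - g u| := by
    intro s t hs hst htc
    obtain ⟨n, hn⟩ : ∃ n : ℕ, t = s + (n:ℤ) := ⟨(t - s).toNat, by omega⟩
    subst hn
    rw [telescope_int g s n]
    refine (Finset.abs_sum_le_sum_abs _ _).trans ?_
    apply Finset.sum_le_sum_of_subset_of_nonneg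
    · intro u hu
      simp only [Finset.mem_Ico] at hu ⊢
      omega
    · intro _ _ _; exact abs_nonneg _
  rcases le_total t s with h | h
  · exact key t s ht1 h hs2
  · rw [abs_sub_comm]; exact key s t hs1 h ht2

lemma oneD_sq_bound (hL : 1 ≤ L) (g : ℤ → ℝ) {b s t : ℤ}
    (hs1 : b ≤ s) (hs2 : s < b + L) (ht1 : b ≤ t) (ht2 : t < b + L) :
    (g s - g t) ^ 2 ≤ (L:ℝ) * ∑ u ∈ Finset.Ico b (b + L - 1), (g (u+1) - g u) ^ 2 := by
  have habs := oneD_abs_bound g hs1 hs2 ht1 ht2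
  have hcard : ((Finset.Ico b (b + L - 1)).card : ℝ) ≤ (L : ℝ) := by
    rw [Int.card_Ico]
    have : (b + L - 1 - b).toNat ≤ L := by omega
    exact_mod_cast this
  have hsq : (g s - g t) ^ 2 ≤ (∑ u ∈ Finset.Ico b (b + L - 1), |g (u+1) - g u|) ^ 2 := by
    rw [← sq_abs (g s - g t)]
    apply pow_le_pow_left₀ (abs_nonneg _) habs _
  refine hsq.trans ?_
  have hcs := sq_sum_le_card_mul_sum_sq (s := Finset.Ico b (b + L - 1))
      (f := fun u => |g (u+1) - g u|)
  simp only [sq_abs] at hcs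
  refine hcs.trans ?_
  apply mul_le_mul_of_nonneg_right hcard
  positivity

end BlockAux


noncomputable section BlockAux2

open AndersonCLT Finset

variable {d L : ℕ}

lemma block_jensen (hL : 1 ≤ L) (f : Site d → ℝ) (x₀ : Site d) {q : ℝ} (hq : 1 ≤ q) :
    ∑ x ∈ blockOf d L x₀, |blockAvg d L f x| ^ q
      ≤ ∑ x ∈ blockOf d L x₀, |f x| ^ q := by
  set B := blockOf d L x₀ with hBdef
  have hcard : (B.card : ℝ) = (L:ℝ) ^ d := by rw [hBdef, card_blockOf]; push_cast; ring
  have hc : (0:ℝ) < (L:ℝ) ^ d := by positivity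
  have hpt : ∀ x ∈ B, |blockAvg d L f x| ^ q ≤ ∑ z ∈ B, ((L:ℝ)^d)⁻¹ * |f z| ^ q := by
    intro x hx
    have havg : blockAvg d L f x = ((L:ℝ)^d)⁻¹ * ∑ z ∈ B, f z := by
      rw [blockAvg_eq_of_mem hL f hx]; rfl
    have habs : |blockAvg d L f x| ≤ ∑ z ∈ B, ((L:ℝ)^d)⁻¹ * |f z| := by
      rw [havg, abs_mul, abs_of_nonneg (by positivity : (0:ℝ) ≤ ((L:ℝ)^d)⁻¹), ← Finset.mul_sum]
      apply mul_le_mul_of_nonneg_left (Finset.abs_sum_le_sum_abs _ _) (by positivity)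
    have hmean := Real.rpow_arith_mean_le_arith_mean_rpow B (fun _ => ((L:ℝ)^d)⁻¹)
      (fun z => |f z|) (fun _ _ => by positivity)
      (by rw [Finset.sum_const, nsmul_eq_mul, hcard]; field_simp)
      (fun _ _ => abs_nonneg _) hq
    calc |blockAvg d L f x| ^ q ≤ (∑ z ∈ B, ((L:ℝ)^d)⁻¹ * |f z|) ^ q := by
          apply Real.rpow_le_rpow (abs_nonneg _) habs (by linarith)
      _ ≤ ∑ z ∈ B, ((L:ℝ)^d)⁻¹ * |f z| ^ q := hmean
  calc ∑ x ∈ B, |blockAvg d L f x| ^ q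
      ≤ ∑ _x ∈ B, ∑ z ∈ B, ((L:ℝ)^d)⁻¹ * |f z| ^ q := Finset.sum_le_sum hpt
    _ = (L:ℝ)^d * ∑ z ∈ B, ((L:ℝ)^d)⁻¹ * |f z| ^ q := by
        rw [Finset.sum_const, nsmul_eq_mul, hcard]
    _ = ∑ z ∈ B, |f z| ^ q := by
        rw [Finset.mul_sum]
        apply Finset.sum_congr rfl
        intro z _
        field_simp

/-- The sum of squared increments of `f` along the full line of the block of `x₀`
through `y` in direction `k`. -/
def lineSum (d L : ℕ) (f : Site d → ℝ) (x₀ : Site d) (k : Fin d) (y : Site d) : ℝ :=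
  ∑ u ∈ Finset.Ico ((L:ℤ) * ((x₀ k).fdiv L)) ((L:ℤ) * ((x₀ k).fdiv L) + L - 1),
    (f (Function.update y k (u+1)) - f (Function.update y k u)) ^ 2

lemma lineSum_nonneg (f : Site d → ℝ) (x₀ : Site d) (k : Fin d) (y : Site d) :
    0 ≤ lineSum d L f x₀ k y :=
  Finset.sum_nonneg fun _ _ => sq_nonneg _

lemma poincare_step2 (hL : 1 ≤ L) (f : Site d → ℝ) (x₀ : Site d) {x z : Site d}
    (hx : x ∈ blockOf d L x₀) (hz : z ∈ blockOf d L x₀) :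
    (f x - f z) ^ 2 ≤ (d:ℝ) * ∑ k : Fin d,
      (L:ℝ) * lineSum d L f x₀ k (fun j => if (j:ℕ) < (k:ℕ) + 1 then z j else x j) := by
  set m : ℕ → Site d := fun n j => if (j:ℕ) < n then z j else x j with hmdef
  have hm0 : m 0 = x := by funext j; simp [hmdef]
  have hmd : m d = z := by funext j; simp [hmdef, j.isLt]
  have htel : f x - f z = ∑ k : Fin d, (f (m (k:ℕ)) - f (m ((k:ℕ)+1))) := by
    rw [Fin.sum_univ_eq_sum_range (fun n => f (m n) - f (m (n+1))) d,
      Finset.sum_range_sub' (fun n => f (m n)) d, hm0, hmd]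
  have hsq : (f x - f z)^2 ≤ (d:ℝ) * ∑ k : Fin d, (f (m (k:ℕ)) - f (m ((k:ℕ)+1)))^2 := by
    rw [htel]
    have := sq_sum_le_card_mul_sum_sq (s := (Finset.univ : Finset (Fin d)))
      (f := fun k : Fin d => f (m (k:ℕ)) - f (m ((k:ℕ)+1)))
    simpa using this
  refine hsq.trans ?_
  apply mul_le_mul_of_nonneg_left _ (by positivity)
  apply Finset.sum_le_sum
  intro k _
  have h1 : m (k:ℕ) = Function.update (m ((k:ℕ)+1)) k (x k) := by
    funext j
    rcases eq_or_ne j k with rfl | hj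
    · simp [hmdef]
    · have hjk : (j:ℕ) ≠ (k:ℕ) := fun h => hj (Fin.ext h)
      simp only [hmdef, Function.update_of_ne hj]
      by_cases hlt : (j:ℕ) < (k:ℕ)
      · simp [hlt, Nat.lt_succ_of_lt hlt]
      · have h2 : ¬ ((j:ℕ) < (k:ℕ)+1) := by omega
        simp [hlt, h2]
  have h2 : m ((k:ℕ)+1) = Function.update (m ((k:ℕ)+1)) k (z k) := by
    funext j
    rcases eq_or_ne j k with rfl | hj
    · simp [hmdef]
    · simp [Function.update_of_ne hj]
  have hxk := (mem_blockOf_iff.1 hx) k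
  have hzk := (mem_blockOf_iff.1 hz) k
  have key := oneD_sq_bound hL (fun u => f (Function.update (m ((k:ℕ)+1)) k u))
    hxk.1 hxk.2 hzk.1 hzk.2
  have e : (f (m (k:ℕ)) - f (m ((k:ℕ)+1)))^2
      = (f (Function.update (m ((k:ℕ)+1)) k (x k))
          - f (Function.update (m ((k:ℕ)+1)) k (z k)))^2 := by rw [← h1, ← h2]
  show (f (m (k:ℕ)) - f (m ((k:ℕ)+1)))^2 ≤ (L:ℝ) * lineSum d L f x₀ k (m ((k:ℕ)+1))
  rw [e]
  simpa [lineSum] using key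

end BlockAux2


noncomputable section BlockAux3

open AndersonCLT Finset

variable {d L : ℕ}

lemma count_mix (f : Site d → ℝ) (x₀ : Site d) (k : Fin d) :
    ∑ p ∈ (blockOf d L x₀) ×ˢ (blockOf d L x₀),
        lineSum d L f x₀ k (fun j => if (j:ℕ) < (k:ℕ) + 1 then p.2 j else p.1 j)
      = (L:ℝ)^d * ∑ u ∈ blockOf d L x₀, lineSum d L f x₀ k u := by
  classical
  have hcard : ((blockOf d L x₀).card : ℝ) = (L:ℝ) ^ d := by
    rw [card_blockOf]; push_cast; ring
  have hmix : ∀ {u v : Site d}, u ∈ blockOf d L x₀ → v ∈ blockOf d L x₀ →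
      ((fun j => if (j:ℕ) < (k:ℕ) + 1 then u j else v j) : Site d) ∈ blockOf d L x₀ := by
    intro u v hu hv
    rw [mem_blockOf_iff] at hu hv ⊢
    intro i
    by_cases h : (i:ℕ) < (k:ℕ) + 1
    · simpa [h] using hu i
    · simpa [h] using hv i
  have hbij : ∑ p ∈ (blockOf d L x₀) ×ˢ (blockOf d L x₀),
      lineSum d L f x₀ k (fun j => if (j:ℕ) < (k:ℕ) + 1 then p.2 j else p.1 j)
      = ∑ p ∈ (blockOf d L x₀) ×ˢ (blockOf d L x₀), lineSum d L f x₀ k p.1 := by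
    apply Finset.sum_nbij'
      (i := fun p : Site d × Site d =>
        (((fun j => if (j:ℕ) < (k:ℕ) + 1 then p.2 j else p.1 j) : Site d),
         ((fun j => if (j:ℕ) < (k:ℕ) + 1 then p.1 j else p.2 j) : Site d)))
      (j := fun p : Site d × Site d =>
        (((fun j => if (j:ℕ) < (k:ℕ) + 1 then p.2 j else p.1 j) : Site d),
         ((fun j => if (j:ℕ) < (k:ℕ) + 1 then p.1 j else p.2 j) : Site d)))
    · rintro ⟨u, v⟩ hp
      rw [Finset.mem_product] at hp ⊢
      exact ⟨hmix hp.2 hp.1, hmix hp.1 hp.2⟩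
    · rintro ⟨u, v⟩ hp
      rw [Finset.mem_product] at hp ⊢
      exact ⟨hmix hp.2 hp.1, hmix hp.1 hp.2⟩
    · rintro ⟨u, v⟩ _
      simp only [Prod.mk.injEq]
      constructor <;> funext j <;> by_cases h : (j:ℕ) < (k:ℕ) + 1 <;> simp [h]
    · rintro ⟨u, v⟩ _
      simp only [Prod.mk.injEq]
      constructor <;> funext j <;> by_cases h : (j:ℕ) < (k:ℕ) + 1 <;> simp [h]
    · rintro ⟨u, v⟩ _
      rfl
  rw [hbij, Finset.sum_product]
  simp only [Finset.sum_const, nsmul_eq_mul]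
  rw [← Finset.mul_sum, hcard]

lemma count_line (hL : 1 ≤ L) (f : Site d → ℝ) (x₀ : Site d) (k : Fin d) :
    ∑ u ∈ blockOf d L x₀, lineSum d L f x₀ k u
      ≤ (L:ℝ) * ∑ y ∈ blockOf d L x₀, (f (y + Pi.single k 1) - f y) ^ 2 := by
  classical
  set b : ℤ := (L:ℤ) * ((x₀ k).fdiv L) with hbdef
  have hupd : ∀ (u : Site d) (t : ℤ),
      Function.update u k (t+1) = Function.update u k t + Pi.single k 1 := by
    intro u t
    funext j
    rcases eq_or_ne j k with rfl | hj
    · simp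
    · simp [Function.update_of_ne hj, Pi.single_eq_of_ne hj]
  have e1 : ∑ u ∈ blockOf d L x₀, lineSum d L f x₀ k u
      = ∑ p ∈ (blockOf d L x₀) ×ˢ (Finset.Ico b (b + L - 1)),
          (f (Function.update p.1 k (p.2+1)) - f (Function.update p.1 k p.2))^2 := by
    rw [Finset.sum_product]
    rfl
  have e2 : ∑ p ∈ (blockOf d L x₀) ×ˢ (Finset.Ico b (b + L - 1)),
        (f (Function.update p.1 k (p.2+1)) - f (Function.update p.1 k p.2))^2
      = ∑ q ∈ ((blockOf d L x₀).filter (fun w => w k ∈ Finset.Ico b (b + L - 1)))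
            ×ˢ (Finset.Ico b (b + L)),
          (f (q.1 + Pi.single k 1) - f q.1)^2 := by
    apply Finset.sum_nbij'
      (i := fun p : Site d × ℤ => (Function.update p.1 k p.2, p.1 k))
      (j := fun q : Site d × ℤ => (Function.update q.1 k q.2, q.1 k))
    · rintro ⟨u, t⟩ hp
      simp only [Finset.mem_product] at hp
      obtain ⟨hp1, hp2⟩ := hp
      rw [Finset.mem_Ico] at hp2
      dsimp only
      rw [Finset.mem_product]
      constructor
      · rw [Finset.mem_filter]
        refine ⟨update_mem_blockOf hL hp1 k hp2.1 (by omega), ?_⟩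
        simp only [Function.update_self, Finset.mem_Ico]
        omega
      · have := (mem_blockOf_iff.1 hp1) k
        rw [Finset.mem_Ico]
        exact this
    · rintro ⟨w, s⟩ hq
      simp only [Finset.mem_product, Finset.mem_filter] at hq
      obtain ⟨⟨hq1, hq2⟩, hq3⟩ := hq
      rw [Finset.mem_Ico] at hq3
      dsimp only
      rw [Finset.mem_product]
      constructor
      · exact update_mem_blockOf hL hq1 k hq3.1 hq3.2
      · simpa using hq2
    · rintro ⟨u, t⟩ _
      simp [Function.update_idem, Function.update_self, Function.update_eq_self]
    · rintro ⟨w, s⟩ _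
      simp [Function.update_idem, Function.update_self, Function.update_eq_self]
    · rintro ⟨u, t⟩ _
      dsimp only
      rw [hupd u t]
  rw [e1, e2, Finset.sum_product]
  simp only [Finset.sum_const, nsmul_eq_mul]
  have hJcard : (((Finset.Ico b (b + L)).card : ℝ)) = (L:ℝ) := by
    rw [Int.card_Ico]
    simp
  calc ∑ w ∈ (blockOf d L x₀).filter (fun w => w k ∈ Finset.Ico b (b + L - 1)),
        ((Finset.Ico b (b + (L:ℤ))).card : ℝ) * (f (w + Pi.single k 1) - f w)^2
      = ((Finset.Ico b (b + (L:ℤ))).card : ℝ) *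
          ∑ w ∈ (blockOf d L x₀).filter (fun w => w k ∈ Finset.Ico b (b + L - 1)),
            (f (w + Pi.single k 1) - f w)^2 := by
        rw [Finset.mul_sum]
    _ ≤ (L:ℝ) * ∑ y ∈ blockOf d L x₀, (f (y + Pi.single k 1) - f y)^2 := by
        rw [hJcard]
        apply mul_le_mul_of_nonneg_left _ (by positivity)
        apply Finset.sum_le_sum_of_subset_of_nonneg (Finset.filter_subset _ _)
        intro _ _ _
        positivity

lemma block_poincare (hL : 1 ≤ L) (f : Site d → ℝ) (x₀ : Site d) :
    ∑ x ∈ blockOf d L x₀, (f x - blockAvg d L f x) ^ 2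
      ≤ (d:ℝ) * (L:ℝ)^2 *
        ∑ y ∈ blockOf d L x₀, ∑ k : Fin d, (f (y + Pi.single k 1) - f y) ^ 2 := by
  classical
  set B := blockOf d L x₀ with hBdef
  have hc : (0:ℝ) < (L:ℝ)^d := by positivity
  have hcard : (B.card : ℝ) = (L:ℝ)^d := by rw [hBdef, card_blockOf]; push_cast; ring
  have step1 : ∀ x ∈ B, (f x - blockAvg d L f x) ^ 2
      ≤ ((L:ℝ)^d)⁻¹ * ∑ z ∈ B, (f x - f z) ^ 2 := by
    intro x hx
    have havg : blockAvg d L f x = ((L:ℝ)^d)⁻¹ * ∑ z ∈ B, f z := by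
      rw [blockAvg_eq_of_mem hL f hx]; rfl
    have hdiff : f x - blockAvg d L f x = ((L:ℝ)^d)⁻¹ * ∑ z ∈ B, (f x - f z) := by
      rw [havg, Finset.sum_sub_distrib, Finset.sum_const, nsmul_eq_mul, hcard]
      field_simp
    rw [hdiff, mul_pow]
    have hcs := sq_sum_le_card_mul_sum_sq (s := B) (f := fun z => f x - f z)
    rw [hcard] at hcs
    calc (((L:ℝ)^d)⁻¹)^2 * (∑ z ∈ B, (f x - f z))^2
        ≤ (((L:ℝ)^d)⁻¹)^2 * ((L:ℝ)^d * ∑ z ∈ B, (f x - f z)^2) :=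
          mul_le_mul_of_nonneg_left hcs (by positivity)
      _ = ((L:ℝ)^d)⁻¹ * ∑ z ∈ B, (f x - f z)^2 := by
          field_simp
  calc ∑ x ∈ B, (f x - blockAvg d L f x) ^ 2
      ≤ ∑ x ∈ B, ((L:ℝ)^d)⁻¹ * ∑ z ∈ B, (f x - f z) ^ 2 := Finset.sum_le_sum step1
    _ = ((L:ℝ)^d)⁻¹ * ∑ p ∈ B ×ˢ B, (f p.1 - f p.2) ^ 2 := by
        rw [← Finset.mul_sum, Finset.sum_product]
    _ ≤ ((L:ℝ)^d)⁻¹ * ∑ p ∈ B ×ˢ B, ((d:ℝ) * ∑ k : Fin d,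
          (L:ℝ) * lineSum d L f x₀ k (fun j => if (j:ℕ) < (k:ℕ) + 1 then p.2 j else p.1 j)) := by
        apply mul_le_mul_of_nonneg_left _ (by positivity)
        apply Finset.sum_le_sum
        intro p hp
        rw [Finset.mem_product] at hp
        exact poincare_step2 hL f x₀ hp.1 hp.2
    _ = ((L:ℝ)^d)⁻¹ * (d:ℝ) * (L:ℝ) * ∑ k : Fin d, ∑ p ∈ B ×ˢ B,
          lineSum d L f x₀ k (fun j => if (j:ℕ) < (k:ℕ) + 1 then p.2 j else p.1 j) := by
        simp only [Finset.mul_sum]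
        rw [Finset.sum_comm (s := B ×ˢ B) (t := (Finset.univ : Finset (Fin d)))]
        refine Finset.sum_congr rfl fun k _ => Finset.sum_congr rfl fun p _ => ?_
        ring
    _ = ((L:ℝ)^d)⁻¹ * (d:ℝ) * (L:ℝ) * ∑ k : Fin d,
          ((L:ℝ)^d * ∑ u ∈ B, lineSum d L f x₀ k u) := by
        congr 1
        exact Finset.sum_congr rfl fun k _ => count_mix f x₀ k
    _ = (d:ℝ) * (L:ℝ) * ∑ k : Fin d, ∑ u ∈ B, lineSum d L f x₀ k u := by
        rw [← Finset.mul_sum]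
        have hc' : ((L:ℝ)^d) ≠ 0 := hc.ne'
        field_simp
    _ ≤ (d:ℝ) * (L:ℝ) * ∑ k : Fin d,
          ((L:ℝ) * ∑ y ∈ B, (f (y + Pi.single k 1) - f y) ^ 2) := by
        apply mul_le_mul_of_nonneg_left _ (by positivity)
        exact Finset.sum_le_sum fun k _ => count_line hL f x₀ k
    _ = (d:ℝ) * (L:ℝ)^2 * ∑ y ∈ B, ∑ k : Fin d, (f (y + Pi.single k 1) - f y) ^ 2 := by
        rw [← Finset.mul_sum,
          Finset.sum_comm (s := (Finset.univ : Finset (Fin d))) (t := B)]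
        ring

end BlockAux3


noncomputable section GlobalAux

open AndersonCLT Finset

variable {d L : ℕ}

lemma exists_good_finset (hL : 1 ≤ L) (f : Site d → ℝ) (hf : (Function.support f).Finite) :
    ∃ S : Finset (Site d),
      (∀ x, f x ≠ 0 → x ∈ S) ∧
      (∀ x ∉ S, blockAvg d L f x = 0) ∧
      (∀ h : Site d → ℝ, ∑ x ∈ S, h x
        = ∑ B ∈ S.image (fun x => blockOf d L x), ∑ x ∈ B, h x) ∧
      (∀ B ∈ S.image (fun x => blockOf d L x), ∃ x₀, B = blockOf d L x₀) := by
  classical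
  set S := hf.toFinset.biUnion (fun y => blockOf d L y) with hSdef
  have hsupp : ∀ x, f x ≠ 0 → x ∈ S := by
    intro x hx
    exact Finset.mem_biUnion.2 ⟨x, hf.mem_toFinset.2 hx, self_mem_blockOf hL x⟩
  have hsat : ∀ x ∈ S, blockOf d L x ⊆ S := by
    intro x hx
    obtain ⟨y, hy, hxy⟩ := Finset.mem_biUnion.1 hx
    rw [blockOf_eq_of_mem hL hxy]
    exact Finset.subset_biUnion_of_mem _ hy
  refine ⟨S, hsupp, ?_, ?_, ?_⟩
  · intro x hx
    have hall : ∀ z ∈ blockOf d L x, f z = 0 := by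
      intro z hz
      by_contra h
      have hzS : z ∈ S := hsupp z h
      have hxz : x ∈ blockOf d L z := by
        rw [blockOf_eq_of_mem hL hz]
        exact self_mem_blockOf hL x
      exact hx (hsat z hzS hxz)
    show ((L:ℝ)^d)⁻¹ * ∑ z ∈ blockOf d L x, f z = 0
    rw [Finset.sum_eq_zero hall, mul_zero]
  · intro h
    rw [← Finset.sum_fiberwise_of_maps_to (g := fun x => blockOf d L x)
      (fun x hx => Finset.mem_image_of_mem _ hx) h]
    apply Finset.sum_congr rfl
    intro B hB
    obtain ⟨x₀, hx₀S, rfl⟩ := Finset.mem_image.1 hB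
    apply Finset.sum_congr _ (fun _ _ => rfl)
    ext z
    simp only [Finset.mem_filter]
    constructor
    · rintro ⟨hzS, hz⟩
      rw [← hz]
      exact self_mem_blockOf hL z
    · intro hz
      exact ⟨hsat x₀ hx₀S hz, blockOf_eq_of_mem hL hz⟩
  · intro B hB
    obtain ⟨x₀, _, h⟩ := Finset.mem_image.1 hB
    exact ⟨x₀, h.symm⟩

end GlobalAux


open AndersonCLT in
/-- Lemma 2.9: `‖f² - f_L²‖_p ≤ C(d) L ‖∇^d f‖_2 ‖f‖_{2p/(2-p)}` for `p ∈ (1,2)`,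
`L ∈ ℕ` and finitely supported `f : ℤ^d → ℝ` (unscaled `ℓ^p`-norms). -/
theorem block_average_comparison (d : ℕ) (hd : 1 ≤ d) :
    ∃ C : ℝ, ∀ p ∈ Set.Ioo (1 : ℝ) 2, ∀ L : ℕ, 1 ≤ L → ∀ f : Site d → ℝ,
      (Function.support f).Finite →
      lpNorm d p (fun x => (f x) ^ 2 - (blockAvg d L f x) ^ 2)
        ≤ C * L * Real.sqrt (dGradSq d f) * lpNorm d (2 * p / (2 - p)) f := by
  classical
  refine ⟨4 * (d:ℝ), ?_⟩
  rintro p ⟨hp1, hp2⟩ L hL f hf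
  set q : ℝ := 2 * p / (2 - p) with hqdef
  have hp0 : (0:ℝ) < p := by linarith
  have h2p : (0:ℝ) < 2 - p := by linarith
  have hq0 : (0:ℝ) < q := by rw [hqdef]; positivity
  have hq1 : 1 ≤ q := by rw [hqdef, le_div_iff₀ h2p]; nlinarith
  have hp' : p ≠ 0 := hp0.ne'
  have hq' : q ≠ 0 := hq0.ne'
  have hdR : (1:ℝ) ≤ (d:ℝ) := by exact_mod_cast hd
  have hLR : (0:ℝ) < (L:ℝ) := by exact_mod_cast hL
  obtain ⟨S, hsupp, havg0, hdecomp, himg⟩ := exists_good_finset hL f hf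
  have hf0 : ∀ x ∉ S, f x = 0 := fun x hx => by
    by_contra h; exact hx (hsupp x h)
  set A : ℝ := ∑ x ∈ S, (f x - blockAvg d L f x) ^ 2 with hA
  set Bq : ℝ := ∑ x ∈ S, |f x + blockAvg d L f x| ^ q with hBq
  set Sq : ℝ := ∑ x ∈ S, |f x| ^ q with hSq
  have hAnn : 0 ≤ A := Finset.sum_nonneg fun _ _ => sq_nonneg _
  have hSqnn : 0 ≤ Sq := Finset.sum_nonneg fun _ _ => by positivity
  have hBqnn : 0 ≤ Bq := Finset.sum_nonneg fun _ _ => by positivity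
  -- reduction of the two lpNorms to finite sums
  have hlpF : lpNorm d p (fun x => (f x) ^ 2 - (blockAvg d L f x) ^ 2)
      = (∑ x ∈ S, |(f x) ^ 2 - (blockAvg d L f x) ^ 2| ^ p) ^ (1/p) := by
    simp only [AndersonCLT.lpNorm]
    congr 1
    apply tsum_eq_sum
    intro x hx
    rw [hf0 x hx, havg0 x hx]
    simp [Real.zero_rpow hp']
  have hlpq : lpNorm d q f = Sq ^ (1/q) := by
    simp only [AndersonCLT.lpNorm, hSq]
    congr 1
    apply tsum_eq_sum
    intro x hx
    rw [hf0 x hx]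
    simp [Real.zero_rpow hq']
  -- Hölder
  have hconj : Real.HolderConjugate (2/p) (2/(2-p)) := by
    rw [Real.holderConjugate_iff]
    constructor
    · rw [lt_div_iff₀ hp0]; linarith
    · rw [inv_div, inv_div]; ring
  have hholder : ∑ x ∈ S, |(f x) ^ 2 - (blockAvg d L f x) ^ 2| ^ p
      ≤ A ^ (p/2) * Bq ^ (p/q) := by
    have hpt : ∀ x, |(f x) ^ 2 - (blockAvg d L f x) ^ 2| ^ p
        = (|f x - blockAvg d L f x| ^ p) * (|f x + blockAvg d L f x| ^ p) := by
      intro x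
      rw [← Real.mul_rpow (abs_nonneg _) (abs_nonneg _), ← abs_mul]
      congr 2
      ring
    have key := Real.inner_le_Lp_mul_Lq_of_nonneg (s := S) (hpq := hconj)
      (f := fun x => |f x - blockAvg d L f x| ^ p)
      (g := fun x => |f x + blockAvg d L f x| ^ p)
      (hf := fun _ _ => by positivity) (hg := fun _ _ => by positivity)
    have e1 : ∑ x ∈ S, (|f x - blockAvg d L f x| ^ p) ^ (2/p) = A := by
      rw [hA]
      apply Finset.sum_congr rfl
      intro x _
      rw [← Real.rpow_mul (abs_nonneg _), show p * (2/p) = 2 by field_simp,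
        show ((2:ℝ)) = ((2:ℕ):ℝ) by norm_num, Real.rpow_natCast, sq_abs]
    have e2 : ∑ x ∈ S, (|f x + blockAvg d L f x| ^ p) ^ (2/(2-p)) = Bq := by
      rw [hBq]
      apply Finset.sum_congr rfl
      intro x _
      rw [← Real.rpow_mul (abs_nonneg _)]
      congr 1
      rw [hqdef]
      field_simp
    have e3 : 1 / (2/p) = p/2 := one_div_div _ _
    have e4 : 1 / (2/(2-p)) = p/q := by
      rw [one_div_div, hqdef]
      rw [eq_div_iff (by positivity : 2 * p / (2 - p) ≠ 0)]
      field_simp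
    rw [e1, e2, e3, e4] at key
    calc ∑ x ∈ S, |(f x) ^ 2 - (blockAvg d L f x) ^ 2| ^ p
        = ∑ x ∈ S, (|f x - blockAvg d L f x| ^ p) * (|f x + blockAvg d L f x| ^ p) :=
          Finset.sum_congr rfl fun x _ => hpt x
      _ ≤ A ^ (p/2) * Bq ^ (p/q) := key
  -- Poincaré, globally
  have hGrfl : dGradSq d f = ∑' y, ∑ k : Fin d, (f (y + Pi.single k 1) - f y) ^ 2 := rfl
  have hGnnpt : ∀ y, (0:ℝ) ≤ ∑ k : Fin d, (f (y + Pi.single k 1) - f y) ^ 2 :=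
    fun y => Finset.sum_nonneg fun _ _ => sq_nonneg _
  have hGnn : 0 ≤ dGradSq d f := by
    rw [hGrfl]; exact tsum_nonneg hGnnpt
  have hApo : A ≤ ((d:ℝ) * L) ^ 2 * dGradSq d f := by
    set S' : Finset (Site d) := S ∪ Finset.univ.biUnion
      (fun k : Fin d => S.image (fun x => x - Pi.single k 1)) with hS'
    have hG0 : ∀ y ∉ S', (∑ k : Fin d, (f (y + Pi.single k 1) - f y) ^ 2) = 0 := by
      intro y hy
      have hyS : y ∉ S := fun h => hy (Finset.mem_union_left _ h)
      apply Finset.sum_eq_zero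
      intro k _
      have h1 : f y = 0 := hf0 y hyS
      have h2 : f (y + Pi.single k 1) = 0 := by
        by_contra h
        have hmem := hsupp _ h
        apply hy
        apply Finset.mem_union_right
        refine Finset.mem_biUnion.2 ⟨k, Finset.mem_univ k, ?_⟩
        refine Finset.mem_image.2 ⟨y + Pi.single k 1, hmem, ?_⟩
        abel
      rw [h1, h2]
      ring
    have hsummable : Summable (fun y => ∑ k : Fin d, (f (y + Pi.single k 1) - f y) ^ 2) :=
      summable_of_ne_finset_zero hG0
    have hsumle : ∑ y ∈ S, ∑ k : Fin d, (f (y + Pi.single k 1) - f y) ^ 2 ≤ dGradSq d f := by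
      rw [hGrfl]
      exact Summable.sum_le_tsum S (fun y _ => hGnnpt y) hsummable
    have hApo1 : A ≤ (d:ℝ) * (L:ℝ)^2 *
        ∑ y ∈ S, ∑ k : Fin d, (f (y + Pi.single k 1) - f y) ^ 2 := by
      have e2' : (∑ y ∈ S, ∑ k : Fin d, (f (y + Pi.single k 1) - f y) ^ 2)
          = ∑ B ∈ S.image (fun x => blockOf d L x), ∑ x ∈ B,
              ∑ k : Fin d, (f (x + Pi.single k 1) - f x) ^ 2 :=
        hdecomp (fun y => ∑ k : Fin d, (f (y + Pi.single k 1) - f y) ^ 2)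
      rw [hA, hdecomp (fun x => (f x - blockAvg d L f x) ^ 2), e2', Finset.mul_sum]
      apply Finset.sum_le_sum
      intro B hB
      obtain ⟨x₀, rfl⟩ := himg B hB
      exact block_poincare hL f x₀
    calc A ≤ (d:ℝ) * (L:ℝ)^2 * ∑ y ∈ S, ∑ k : Fin d, (f (y + Pi.single k 1) - f y) ^ 2 :=
          hApo1
      _ ≤ (d:ℝ) * (L:ℝ)^2 * dGradSq d f :=
          mul_le_mul_of_nonneg_left hsumle (by positivity)
      _ ≤ ((d:ℝ) * L) ^ 2 * dGradSq d f := by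
          apply mul_le_mul_of_nonneg_right _ hGnn
          nlinarith
  have hsqrtA : Real.sqrt A ≤ (d:ℝ) * L * Real.sqrt (dGradSq d f) := by
    have h := Real.sqrt_le_sqrt hApo
    rw [Real.sqrt_mul (sq_nonneg _), Real.sqrt_sq (by positivity)] at h
    exact h
  -- Jensen, globally
  have hJensen : ∑ x ∈ S, |blockAvg d L f x| ^ q ≤ Sq := by
    rw [hSq, hdecomp (fun x => |blockAvg d L f x| ^ q), hdecomp (fun x => |f x| ^ q)]
    apply Finset.sum_le_sum
    intro B hB
    obtain ⟨x₀, rfl⟩ := himg B hB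
    exact block_jensen hL f x₀ hq1
  have hBle : Bq ≤ (2:ℝ)^(q+1) * Sq := by
    have hpt : ∀ x, |f x + blockAvg d L f x| ^ q
        ≤ (2:ℝ)^q * (|f x|^q + |blockAvg d L f x|^q) := by
      intro x
      have h1 : |f x + blockAvg d L f x| ≤ 2 * max |f x| |blockAvg d L f x| := by
        have := abs_add_le (f x) (blockAvg d L f x)
        have h2 := le_max_left |f x| |blockAvg d L f x|
        have h3 := le_max_right |f x| |blockAvg d L f x|
        linarith
      have h2 : |f x + blockAvg d L f x| ^ q ≤ (2 * max |f x| |blockAvg d L f x|) ^ q :=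
        Real.rpow_le_rpow (abs_nonneg _) h1 (by linarith)
      have hmnn : 0 ≤ max |f x| |blockAvg d L f x| :=
        (abs_nonneg _).trans (le_max_left _ _)
      have h3 : (2 * max |f x| |blockAvg d L f x|) ^ q
          = 2^q * (max |f x| |blockAvg d L f x|)^q :=
        Real.mul_rpow (by norm_num) hmnn
      have h4 : (max |f x| |blockAvg d L f x|)^q ≤ |f x|^q + |blockAvg d L f x|^q := by
        rcases max_cases |f x| |blockAvg d L f x| with ⟨hm, _⟩ | ⟨hm, _⟩ <;> rw [hm]
        · have : (0:ℝ) ≤ |blockAvg d L f x| ^ q := by positivity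
          linarith
        · have : (0:ℝ) ≤ |f x| ^ q := by positivity
          linarith
      calc |f x + blockAvg d L f x| ^ q ≤ (2 * max |f x| |blockAvg d L f x|) ^ q := h2
        _ = 2^q * (max |f x| |blockAvg d L f x|)^q := h3
        _ ≤ (2:ℝ)^q * (|f x|^q + |blockAvg d L f x|^q) := by
            apply mul_le_mul_of_nonneg_left h4 (by positivity)
    calc Bq ≤ ∑ x ∈ S, (2:ℝ)^q * (|f x|^q + |blockAvg d L f x|^q) :=
          Finset.sum_le_sum fun x _ => hpt x
      _ = (2:ℝ)^q * (Sq + ∑ x ∈ S, |blockAvg d L f x|^q) := by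
          rw [← Finset.mul_sum, Finset.sum_add_distrib, hSq]
      _ ≤ (2:ℝ)^q * (Sq + Sq) := by
          apply mul_le_mul_of_nonneg_left (by linarith) (by positivity)
      _ = (2:ℝ)^(q+1) * Sq := by
          rw [Real.rpow_add (by norm_num : (0:ℝ) < 2), Real.rpow_one]
          ring
  have hBq14 : Bq^(1/q) ≤ 4 * Sq^(1/q) := by
    have h1 : Bq^(1/q) ≤ ((2:ℝ)^(q+1) * Sq)^(1/q) :=
      Real.rpow_le_rpow hBqnn hBle (by positivity)
    rw [Real.mul_rpow (by positivity) hSqnn] at h1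
    have h2 : ((2:ℝ)^(q+1))^(1/q) ≤ 4 := by
      rw [← Real.rpow_mul (by norm_num : (0:ℝ) ≤ 2)]
      have hle : (q+1) * (1/q) ≤ 2 := by
        rw [mul_one_div, div_le_iff₀ hq0]
        linarith
      calc (2:ℝ)^((q+1)*(1/q)) ≤ (2:ℝ)^(2:ℝ) :=
            Real.rpow_le_rpow_of_exponent_le (by norm_num) hle
        _ = 4 := by
            rw [show ((2:ℝ)) = ((2:ℕ):ℝ) from by norm_num, Real.rpow_natCast]
            norm_num
    calc Bq^(1/q) ≤ ((2:ℝ)^(q+1))^(1/q) * Sq^(1/q) := h1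
      _ ≤ 4 * Sq^(1/q) := mul_le_mul_of_nonneg_right h2 (by positivity)
  -- final chain
  rw [hlpF, hlpq]
  have hFsnn : (0:ℝ) ≤ ∑ x ∈ S, |(f x) ^ 2 - (blockAvg d L f x) ^ 2| ^ p :=
    Finset.sum_nonneg fun _ _ => by positivity
  calc (∑ x ∈ S, |(f x) ^ 2 - (blockAvg d L f x) ^ 2| ^ p) ^ (1/p)
      ≤ (A ^ (p/2) * Bq ^ (p/q)) ^ (1/p) :=
        Real.rpow_le_rpow hFsnn hholder (by positivity)
    _ = A ^ ((p/2) * (1/p)) * Bq ^ ((p/q) * (1/p)) := by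
        rw [Real.mul_rpow (Real.rpow_nonneg hAnn _) (Real.rpow_nonneg hBqnn _),
          ← Real.rpow_mul hAnn, ← Real.rpow_mul hBqnn]
    _ = A ^ ((1:ℝ)/2) * Bq ^ (1/q) := by
        rw [show (p/2) * (1/p) = (1:ℝ)/2 by field_simp,
          show (p/q) * (1/p) = 1/q by field_simp]
    _ = Real.sqrt A * Bq ^ (1/q) := by
        rw [← Real.sqrt_eq_rpow]
    _ ≤ ((d:ℝ) * L * Real.sqrt (dGradSq d f)) * (4 * Sq^(1/q)) := by
        apply mul_le_mul hsqrtA hBq14 (by positivity) (by positivity)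
    _ = 4 * (d:ℝ) * L * Real.sqrt (dGradSq d f) * Sq ^ (1/q) := by
        ring
end
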